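/- arXiv:2310.18730 — 4 statements merged into one kernel-verified Lean document; each statement's English description precedes it below -/
import Mathlib

section
/- Let A ∈ DM_loc(Ω), λ : Ω → [0,1] Borel, and u ∈ BV_loc^{A,λ}(Ω). Then u^λ A ∈ DM_loc(Ω) and the Leibniz rule (A, Du)_λ = -u^λ div A + div(u^λ A) holds on Ω in the sense of Radon measures. -/
open MeasureTheory Filter Topology Metric Set ENNReal NNReal

noncomputable section

abbrev RN (N : ℕ) := EuclideanSpace ℝ (Fin N)

/-- A real Radon measure on `Ω`, locally finite on `Ω`, given by its Jordan decomposition. -/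
structure LocM (N : ℕ) (Ω : Set (RN N)) where
  pos : Measure (RN N)
  neg : Measure (RN N)
  singular : pos ⟂ₘ neg
  posNull : pos Ωᶜ = 0
  negNull : neg Ωᶜ = 0
  posLoc : ∀ x ∈ Ω, ∃ s ∈ 𝓝 x, pos s < ⊤
  negLoc : ∀ x ∈ Ω, ∃ s ∈ 𝓝 x, neg s < ⊤

namespace LocM

variable {N : ℕ} {Ω : Set (RN N)}

/-- Integral of a real function against a (signed) local measure. -/
def intg (μ : LocM N Ω) (f : RN N → ℝ) : ℝ :=
  ∫ x, f x ∂μ.pos - ∫ x, f x ∂μ.neg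

/-- Total variation measure. -/
def var (μ : LocM N Ω) : Measure (RN N) := μ.pos + μ.neg

/-- Signed value of a set. -/
def rval (μ : LocM N Ω) (s : Set (RN N)) : ℝ := (μ.pos s).toReal - (μ.neg s).toReal

end LocM

/-- A finite real Radon measure on `Ω`. -/
structure FM (N : ℕ) (Ω : Set (RN N)) where
  pos : Measure (RN N)
  neg : Measure (RN N)
  posFin : IsFiniteMeasure pos
  negFin : IsFiniteMeasure neg
  singular : pos ⟂ₘ neg
  posNull : pos Ωᶜ = 0
  negNull : neg Ωᶜ = 0

namespace FM

variable {N : ℕ} {Ω : Set (RN N)}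

def intg (μ : FM N Ω) (f : RN N → ℝ) : ℝ :=
  ∫ x, f x ∂μ.pos - ∫ x, f x ∂μ.neg

def var (μ : FM N Ω) : Measure (RN N) := μ.pos + μ.neg

def rval (μ : FM N Ω) (s : Set (RN N)) : ℝ := (μ.pos s).toReal - (μ.neg s).toReal

/-- Total variation of `Ω` (the total mass). -/
def tv (μ : FM N Ω) : ℝ := (μ.pos Set.univ).toReal + (μ.neg Set.univ).toReal

end FM

/-- Smooth compactly supported test functions in `Ω`. -/
def IsTest {N : ℕ} (Ω : Set (RN N)) (φ : RN N → ℝ) : Prop :=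
  ContDiff ℝ (⊤ : ℕ∞) φ ∧ HasCompactSupport φ ∧ tsupport φ ⊆ Ω

/-- C¹ compactly supported test functions in `Ω`. -/
def IsTest1 {N : ℕ} (Ω : Set (RN N)) (φ : RN N → ℝ) : Prop :=
  ContDiff ℝ 1 φ ∧ HasCompactSupport φ ∧ tsupport φ ⊆ Ω

/-- `i`-th partial derivative. -/
def gradComp {N : ℕ} (φ : RN N → ℝ) (i : Fin N) (x : RN N) : ℝ :=
  fderiv ℝ φ x (EuclideanSpace.single i 1)

/-- The total variation measure `|A|` (up to equivalence) of a vector measure `A`. -/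
def varSum {N : ℕ} {Ω : Set (RN N)} (A : Fin N → LocM N Ω) : Measure (RN N) :=
  ∑ i, (A i).var

def varSumF {N : ℕ} {Ω : Set (RN N)} (A : Fin N → FM N Ω) : Measure (RN N) :=
  ∑ i, (A i).var

/-- `σ` is the distributional divergence of the vector measure `A` on `Ω`. -/
def IsDivergence {N : ℕ} (Ω : Set (RN N)) (A : Fin N → LocM N Ω) (σ : LocM N Ω) : Prop :=
  ∀ φ : RN N → ℝ, IsTest Ω φ →
    σ.intg φ = - ∑ i, (A i).intg (gradComp φ i)

def IsDivergenceF {N : ℕ} (Ω : Set (RN N)) (A : Fin N → FM N Ω) (σ : FM N Ω) : Prop :=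
  ∀ φ : RN N → ℝ, IsTest Ω φ →
    σ.intg φ = - ∑ i, (A i).intg (gradComp φ i)

/-- The Lebesgue density of `E` at `x` exists and equals `d`. -/
def hasDensity {N : ℕ} (E : Set (RN N)) (x : RN N) (d : ℝ) : Prop :=
  Tendsto (fun r : ℝ => (volume (E ∩ ball x r)).toReal / (volume (ball x r)).toReal)
    (𝓝[>] 0) (𝓝 d)

/-- Points of density 1: `E¹`. -/
def densOne {N : ℕ} (E : Set (RN N)) : Set (RN N) := {x | hasDensity E x 1}

/-- Measure-theoretic boundary `∂*E`. -/
def essBdry {N : ℕ} (E : Set (RN N)) : Set (RN N) :=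
  {x | ¬ hasDensity E x 0 ∧ ¬ hasDensity E x 1}

/-- The boundary `∂⁻E`. -/
def minusBdry {N : ℕ} (E : Set (RN N)) : Set (RN N) :=
  {x | ∀ r : ℝ, 0 < r → 0 < volume (E ∩ ball x r) ∧ volume (E ∩ ball x r) < volume (ball x r)}

/-- Approximate liminf `u⁻`. -/
def aliminf {N : ℕ} (u : RN N → ℝ) (x : RN N) : EReal :=
  sSup {t : EReal | hasDensity {y | ((u y : EReal)) < t} x 0}

/-- Approximate limsup `u⁺`. -/
def alimsup {N : ℕ} (u : RN N → ℝ) (x : RN N) : EReal :=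
  sInf {t : EReal | hasDensity {y | t < ((u y : EReal))} x 0}

/-- The `λ`-representative `u^λ = (1-λ)u⁻ + λu⁺`, with the convention
`u^λ = (2λ-1)·(+∞)` (and `0·∞ = 0`) on `Z_u = {u⁺ = +∞, u⁻ = -∞}`. -/
def lrep {N : ℕ} (u lam : RN N → ℝ) (x : RN N) : EReal :=
  if alimsup u x = ⊤ ∧ aliminf u x = ⊥ then ((2 * lam x - 1 : ℝ) : EReal) * (⊤ : EReal)
  else ((1 - lam x : ℝ) : EReal) * aliminf u x + ((lam x : ℝ) : EReal) * alimsup u x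

/-- `lam` is a Borel function with values in `[0,1]`. -/
def IsLam {N : ℕ} (lam : RN N → ℝ) : Prop :=
  Measurable lam ∧ ∀ x, lam x ∈ Icc (0:ℝ) 1

/-- An extended-real valued function belongs to `L¹(μ)`. -/
def Fin1 {N : ℕ} (f : RN N → EReal) (μ : Measure (RN N)) : Prop :=
  (∀ᵐ x ∂μ, f x ≠ ⊤ ∧ f x ≠ ⊥) ∧ Integrable (fun x => (f x).toReal) μ

/-- An extended-real valued function belongs to `L¹_loc(Ω, μ)`. -/
def Fin1loc {N : ℕ} (Ω : Set (RN N)) (f : RN N → EReal) (μ : Measure (RN N)) : Prop :=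
  ∀ K : Set (RN N), IsCompact K → K ⊆ Ω →
    (∀ᵐ x ∂μ.restrict K, f x ≠ ⊤ ∧ f x ≠ ⊥) ∧
    IntegrableOn (fun x => (f x).toReal) K μ

/-- The `λ`-pairing distribution `⟨(A,Du)_λ, φ⟩`. -/
def pairing {N : ℕ} {Ω : Set (RN N)} (A : Fin N → LocM N Ω) (σ : LocM N Ω)
    (u lam : RN N → ℝ) (φ : RN N → ℝ) : ℝ :=
  - σ.intg (fun x => (lrep u lam x).toReal * φ x)
  - ∑ i, (A i).intg (fun x => (lrep u lam x).toReal * gradComp φ i x)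

/-- `u ∈ X_loc^{A,λ}(Ω)`. -/
def XlocMem {N : ℕ} {Ω : Set (RN N)} (A : Fin N → LocM N Ω) (σ : LocM N Ω)
    (u lam : RN N → ℝ) : Prop :=
  Fin1loc Ω (lrep u lam) (varSum A) ∧ Fin1loc Ω (lrep u lam) σ.var

/-- `χ_E^λ = χ_{E¹} + λ χ_{∂*E}`. -/
def chiLam {N : ℕ} (E : Set (RN N)) (lam : RN N → ℝ) (x : RN N) : ℝ :=
  (densOne E).indicator (fun _ => (1:ℝ)) x + lam x * (essBdry E).indicator (fun _ => (1:ℝ)) x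

/-- The `λ`-pairing distribution `⟨(A,Dχ_E)_λ, φ⟩`. -/
def pairingSet {N : ℕ} {Ω : Set (RN N)} (A : Fin N → LocM N Ω) (σ : LocM N Ω)
    (E : Set (RN N)) (lam : RN N → ℝ) (φ : RN N → ℝ) : ℝ :=
  - σ.intg (fun x => chiLam E lam x * φ x)
  - ∑ i, (A i).intg (fun x => chiLam E lam x * gradComp φ i x)

/-- The support of a (nonnegative) measure. -/
def msupp {N : ℕ} (μ : Measure (RN N)) : Set (RN N) := {x | ∀ U ∈ 𝓝 x, μ U ≠ 0}

/-- The measure `|A|·L^N` of a density field `a`. -/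
def vmeas {N : ℕ} (Ω : Set (RN N)) (a : RN N → RN N) : Measure (RN N) :=
  (volume.restrict Ω).withDensity (fun x => (‖a x‖₊ : ℝ≥0∞))

/-- `σ` is the distributional divergence on `Ω` of the `L¹_loc` field `a`. -/
def IsDivergenceD {N : ℕ} (Ω : Set (RN N)) (a : RN N → RN N) (σ : LocM N Ω) : Prop :=
  ∀ φ : RN N → ℝ, IsTest Ω φ → σ.intg φ = - ∫ x in Ω, fderiv ℝ φ x (a x)

/-- The `λ`-pairing for a density field `a`. -/
def pairingD {N : ℕ} (Ω : Set (RN N)) (a : RN N → RN N) (σ : LocM N Ω)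
    (u lam φ : RN N → ℝ) : ℝ :=
  - σ.intg (fun x => (lrep u lam x).toReal * φ x)
  - ∫ x in Ω, (lrep u lam x).toReal * fderiv ℝ φ x (a x)

/-- The set `λ`-pairing for a density field `a`. -/
def pairingSetD {N : ℕ} (Ω : Set (RN N)) (a : RN N → RN N) (σ : LocM N Ω)
    (E : Set (RN N)) (lam φ : RN N → ℝ) : ℝ :=
  - σ.intg (fun x => chiLam E lam x * φ x)
  - ∫ x in Ω, chiLam E lam x * fderiv ℝ φ x (a x)

/-- `u ∈ X_loc^{A,λ}(Ω)` for a density field. -/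
def XlocMemD {N : ℕ} (Ω : Set (RN N)) (a : RN N → RN N) (σ : LocM N Ω)
    (u lam : RN N → ℝ) : Prop :=
  Fin1loc Ω (lrep u lam) (vmeas Ω a) ∧ Fin1loc Ω (lrep u lam) σ.var

/-- `u ∈ BV_loc^{A,λ}(Ω)` for a density field. -/
def BVlocD {N : ℕ} (Ω : Set (RN N)) (a : RN N → RN N) (σ : LocM N Ω)
    (u lam : RN N → ℝ) : Prop :=
  XlocMemD Ω a σ u lam ∧
  ∃ μ : LocM N Ω, ∀ φ, IsTest Ω φ → pairingD Ω a σ u lam φ = μ.intg φ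



private lemma meas_compact_lt_top {N : ℕ} {Ω K : Set (RN N)} {m : Measure (RN N)}
    (hloc : ∀ x ∈ Ω, ∃ s ∈ 𝓝 x, m s < ⊤) (hK : IsCompact K) (hKΩ : K ⊆ Ω) : m K < ⊤ := by
  classical
  choose! s hs hfin using hloc
  obtain ⟨t, htK, hcov⟩ := hK.elim_nhds_subcover (fun x => interior (s x))
    (fun x hx => interior_mem_nhds.mpr (hs x (hKΩ hx)))
  calc m K ≤ m (⋃ x ∈ t, interior (s x)) := measure_mono hcov
    _ ≤ ∑ x ∈ t, m (interior (s x)) := measure_biUnion_finset_le t _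
    _ < ⊤ := ENNReal.sum_lt_top.mpr fun x hx =>
        lt_of_le_of_lt (measure_mono interior_subset) (hfin x (hKΩ (htK x hx)))

private lemma integrable_of_tsupport {N : ℕ} {m : Measure (RN N)} {φ : RN N → ℝ}
    (hc : Continuous φ) (hs : HasCompactSupport φ) (hm : m (tsupport φ) < ⊤) :
    Integrable φ m := by
  obtain ⟨C, hC⟩ := hc.bounded_above_of_compact_support hs
  refine ⟨hc.aestronglyMeasurable, ?_⟩
  have h1 : ∫⁻ x, ‖φ x‖₊ ∂m ≤ ∫⁻ x, (tsupport φ).indicator (fun _ => ENNReal.ofReal C) x ∂m := by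
    refine lintegral_mono fun x => ?_
    by_cases hx : x ∈ tsupport φ
    · simp only [Set.indicator_of_mem hx]
      rw [← enorm_eq_nnnorm, ← ofReal_norm]
      exact ENNReal.ofReal_le_ofReal (hC x)
    · simp [Set.indicator_of_notMem hx, image_eq_zero_of_notMem_tsupport hx]
  have h2 : ∫⁻ x, (tsupport φ).indicator (fun _ => ENNReal.ofReal C) x ∂m
      = ENNReal.ofReal C * m (tsupport φ) := by
    rw [lintegral_indicator (isClosed_tsupport φ).measurableSet _]
    simp
  exact lt_of_le_of_lt h1 (h2 ▸ ENNReal.mul_lt_top ENNReal.ofReal_lt_top hm)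

private lemma abs_max_le' (a : ℝ) : |max a 0| ≤ |a| := by
  rcases le_total a 0 with h | h
  · rw [max_eq_right h]; simp [abs_nonneg a]
  · rw [max_eq_left h]

/-- if `u ∈ BV_loc^{A,λ}(Ω)` then `u^λ A ∈ DM_loc(Ω)` (its divergence is a
Radon measure `ν`) and the Leibniz rule `(A,Du)_λ = -u^λ div A + div(u^λ A)` holds. -/
theorem stmt4 {N : ℕ} (Ω : Set (RN N)) (hΩ : IsOpen Ω)
    (A : Fin N → LocM N Ω) (σ : LocM N Ω) (hdiv : IsDivergence Ω A σ)
    (lam : RN N → ℝ) (hlam : IsLam lam)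
    (u : RN N → ℝ) (hu : Measurable u) (hX : XlocMem A σ u lam)
    (μ : LocM N Ω) (hμ : ∀ φ, IsTest Ω φ → pairing A σ u lam φ = μ.intg φ) :
    ∃ ν : LocM N Ω,
      (∀ φ, IsTest Ω φ →
        ν.intg φ = - ∑ i, (A i).intg (fun x => (lrep u lam x).toReal * gradComp φ i x)) ∧
      (∀ φ, IsTest Ω φ →
        μ.intg φ = - σ.intg (fun x => (lrep u lam x).toReal * φ x) + ν.intg φ) := by
  classical
  obtain ⟨hXA, hXσ⟩ := hX
  -- compact exhaustion of Ω
  obtain ⟨F, hFcl, hFΩ, hFU, hFmono⟩ := hΩ.exists_iUnion_isClosed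
  have hKc : ∀ m : ℕ, IsCompact (F m ∩ closedBall 0 m) :=
    fun m => (isCompact_closedBall 0 m).inter_left (hFcl m)
  have hKΩ : ∀ m : ℕ, F m ∩ closedBall 0 m ⊆ Ω := fun m => Set.inter_subset_left.trans (hFΩ m)
  have hKU : ⋃ m, F m ∩ closedBall 0 m = Ω := by
    apply Set.Subset.antisymm (Set.iUnion_subset hKΩ)
    intro x hx
    rw [← hFU] at hx
    obtain ⟨m, hm⟩ := Set.mem_iUnion.mp hx
    obtain ⟨k, hk⟩ := exists_nat_ge ‖x‖
    refine Set.mem_iUnion.mpr ⟨max m k, hFmono (le_max_left m k) hm,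
      mem_closedBall_zero_iff.mpr ?_⟩
    exact hk.trans (by exact_mod_cast Nat.cast_le.mpr (le_max_right m k))
  have hσposle : σ.pos ≤ σ.var := Measure.le_add_right le_rfl
  have hσnegle : σ.neg ≤ σ.var := Measure.le_add_left le_rfl
  have hΩm : MeasurableSet Ω := hΩ.measurableSet
  have hvarΩ : σ.var Ωᶜ = 0 := by
    simp [LocM.var, Measure.add_apply, σ.posNull, σ.negNull]
  have hΩae : ∀ᵐ x ∂σ.var, x ∈ Ω := by
    have := compl_mem_ae_iff.mpr hvarΩ
    simpa using this
  have hrestr : σ.var.restrict Ω = σ.var := Measure.restrict_eq_self_of_ae_mem hΩae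
  -- a.e. measurable representative of u^λ w.r.t. |div A|
  have hfae : AEMeasurable (fun x => (lrep u lam x).toReal) σ.var := by
    have h1 : σ.var = σ.var.restrict (⋃ m, F m ∩ closedBall 0 m) := by
      rw [hKU, hrestr]
    rw [h1, aemeasurable_iUnion_iff]
    intro m
    exact ((hXσ _ (hKc m) (hKΩ m)).2.aestronglyMeasurable).aemeasurable
  obtain ⟨g, hgmeas, hgae⟩ := hfae
  have hgaepos : (fun x => (lrep u lam x).toReal) =ᵐ[σ.pos] g :=
    hgae.filter_mono (ae_mono hσposle)
  have hgaeneg : (fun x => (lrep u lam x).toReal) =ᵐ[σ.neg] g :=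
    hgae.filter_mono (ae_mono hσnegle)
  set gp : RN N → ℝ≥0∞ := fun x => ENNReal.ofReal (g x) with hgpdef
  set gm : RN N → ℝ≥0∞ := fun x => ENNReal.ofReal (-g x) with hgmdef
  have hgpm : Measurable gp := ENNReal.measurable_ofReal.comp hgmeas
  have hgmm : Measurable gm := ENNReal.measurable_ofReal.comp hgmeas.neg
  set p : Measure (RN N) := μ.pos + σ.pos.withDensity gp + σ.neg.withDensity gm with hpdef
  set n : Measure (RN N) := μ.neg + σ.pos.withDensity gm + σ.neg.withDensity gp with hndef
  set ρ : Measure (RN N) := p + n with hρdef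
  -- finiteness of withDensity pieces on compacts
  have hwdK : ∀ (m : Measure (RN N)), m ≤ σ.var → ∀ (d : RN N → ℝ≥0∞),
      (∀ x, d x ≤ (‖g x‖₊ : ℝ≥0∞)) →
      ∀ K', IsCompact K' → K' ⊆ Ω → m.withDensity d K' < ⊤ := by
    intro m hm d hd K' hK' hK'Ω
    rw [withDensity_apply _ hK'.isClosed.measurableSet]
    calc ∫⁻ x in K', d x ∂m ≤ ∫⁻ x in K', (‖g x‖₊ : ℝ≥0∞) ∂m := lintegral_mono fun x => hd x
      _ ≤ ∫⁻ x in K', (‖g x‖₊ : ℝ≥0∞) ∂σ.var :=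
          lintegral_mono' (Measure.restrict_mono (subset_refl _) hm) le_rfl
      _ = ∫⁻ x in K', (‖(lrep u lam x).toReal‖₊ : ℝ≥0∞) ∂σ.var := by
          refine lintegral_congr_ae ?_
          filter_upwards [ae_restrict_of_ae hgae] with x hx
          rw [hx]
      _ < ⊤ := (hXσ K' hK' hK'Ω).2.2
  have hgpbd : ∀ x, gp x ≤ (‖g x‖₊ : ℝ≥0∞) := fun x => by
    rw [← enorm_eq_nnnorm, Real.enorm_eq_ofReal_abs]; exact ENNReal.ofReal_le_ofReal (le_abs_self _)
  have hgmbd : ∀ x, gm x ≤ (‖g x‖₊ : ℝ≥0∞) := fun x => by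
    rw [← enorm_eq_nnnorm, Real.enorm_eq_ofReal_abs]; exact ENNReal.ofReal_le_ofReal (neg_le_abs _)
  have hpK : ∀ K', IsCompact K' → K' ⊆ Ω → p K' < ⊤ := by
    intro K' hK' hK'Ω
    have h1 := meas_compact_lt_top μ.posLoc hK' hK'Ω
    have h2 := hwdK σ.pos hσposle gp hgpbd K' hK' hK'Ω
    have h3 := hwdK σ.neg hσnegle gm hgmbd K' hK' hK'Ω
    simp only [hpdef, Measure.add_apply]
    exact ENNReal.add_lt_top.mpr ⟨ENNReal.add_lt_top.mpr ⟨h1, h2⟩, h3⟩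
  have hnK : ∀ K', IsCompact K' → K' ⊆ Ω → n K' < ⊤ := by
    intro K' hK' hK'Ω
    have h1 := meas_compact_lt_top μ.negLoc hK' hK'Ω
    have h2 := hwdK σ.pos hσposle gm hgmbd K' hK' hK'Ω
    have h3 := hwdK σ.neg hσnegle gp hgpbd K' hK' hK'Ω
    simp only [hndef, Measure.add_apply]
    exact ENNReal.add_lt_top.mpr ⟨ENNReal.add_lt_top.mpr ⟨h1, h2⟩, h3⟩
  have hρK : ∀ K', IsCompact K' → K' ⊆ Ω → ρ K' < ⊤ := by
    intro K' hK' hK'Ω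
    simp only [hρdef, Measure.add_apply]
    exact ENNReal.add_lt_top.mpr ⟨hpK K' hK' hK'Ω, hnK K' hK' hK'Ω⟩
  have hρloc : ∀ x ∈ Ω, ∃ s ∈ 𝓝 x, ρ s < ⊤ := by
    intro x hx
    obtain ⟨ε, hε, hball⟩ := Metric.isOpen_iff.mp hΩ x hx
    refine ⟨closedBall x (ε / 2), closedBall_mem_nhds x (by positivity), ?_⟩
    exact hρK _ (isCompact_closedBall _ _) ((closedBall_subset_ball (by linarith)).trans hball)
  -- null outside Ω
  have hwdnull : ∀ (m : Measure (RN N)), m Ωᶜ = 0 → ∀ d : RN N → ℝ≥0∞,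
      m.withDensity d Ωᶜ = 0 := by
    intro m hm d
    rw [withDensity_apply _ hΩm.compl]
    exact setLIntegral_measure_zero _ _ hm
  have hpΩ : p Ωᶜ = 0 := by
    simp [hpdef, Measure.add_apply, μ.posNull, hwdnull σ.pos σ.posNull,
      hwdnull σ.neg σ.negNull]
  have hnΩ : n Ωᶜ = 0 := by
    simp [hndef, Measure.add_apply, μ.negNull, hwdnull σ.pos σ.posNull,
      hwdnull σ.neg σ.negNull]
  have hρΩ : ρ Ωᶜ = 0 := by simp [hρdef, Measure.add_apply, hpΩ, hnΩ]
  -- σ-finiteness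
  haveI hSFρ : SigmaFinite ρ := by
    refine ⟨⟨⟨fun m => (F m ∩ closedBall 0 m) ∪ Ωᶜ, fun _ => Set.mem_univ _, fun m => ?_, ?_⟩⟩⟩
    · refine lt_of_le_of_lt (measure_union_le _ _) ?_
      rw [hρΩ]
      simpa using hρK _ (hKc m) (hKΩ m)
    · refine Set.eq_univ_of_forall fun x => ?_
      by_cases hx : x ∈ Ω
      · rw [← hKU] at hx
        obtain ⟨m, hm⟩ := Set.mem_iUnion.mp hx
        exact Set.mem_iUnion.mpr ⟨m, Or.inl hm⟩
      · exact Set.mem_iUnion.mpr ⟨0, Or.inr hx⟩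
  have hple : p ≤ ρ := Measure.le_add_right le_rfl
  have hnle : n ≤ ρ := Measure.le_add_left le_rfl
  haveI : SigmaFinite p := Measure.sigmaFinite_of_le ρ hple
  haveI : SigmaFinite n := Measure.sigmaFinite_of_le ρ hnle
  have hpρ : p ≪ ρ := hple.absolutelyContinuous
  have hnρ : n ≪ ρ := hnle.absolutelyContinuous
  set gP : RN N → ℝ≥0∞ := p.rnDeriv ρ with hgPdef
  set gN : RN N → ℝ≥0∞ := n.rnDeriv ρ with hgNdef
  have hgPm : Measurable gP := Measure.measurable_rnDeriv p ρ
  have hgNm : Measurable gN := Measure.measurable_rnDeriv n ρ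
  have hgPfin : ∀ᵐ x ∂ρ, gP x < ⊤ := Measure.rnDeriv_lt_top p ρ
  have hgNfin : ∀ᵐ x ∂ρ, gN x < ⊤ := Measure.rnDeriv_lt_top n ρ
  set S : Set (RN N) := {x | gN x ≤ gP x} with hSdef
  have hSm : MeasurableSet S := measurableSet_le hgNm hgPm
  set posD : RN N → ℝ≥0∞ := S.indicator (fun x => gP x - gN x) with hposDdef
  set negD : RN N → ℝ≥0∞ := Sᶜ.indicator (fun x => gN x - gP x) with hnegDdef
  have hposDm : Measurable posD := (hgPm.sub hgNm).indicator hSm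
  have hnegDm : Measurable negD := (hgNm.sub hgPm).indicator hSm.compl
  have hposD_le : ∀ x, posD x ≤ gP x := fun x => by
    by_cases hx : x ∈ S
    · rw [hposDdef, Set.indicator_of_mem hx]; exact tsub_le_self
    · rw [hposDdef, Set.indicator_of_notMem hx]; exact zero_le
  have hnegD_le : ∀ x, negD x ≤ gN x := fun x => by
    by_cases hx : x ∈ Sᶜ
    · rw [hnegDdef, Set.indicator_of_mem hx]; exact tsub_le_self
    · rw [hnegDdef, Set.indicator_of_notMem hx]; exact zero_le
  have hνple : ρ.withDensity posD ≤ p := by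
    have h := withDensity_mono (μ := ρ) (ae_of_all _ hposD_le)
    rwa [Measure.withDensity_rnDeriv_eq p ρ hpρ] at h
  have hνnle : ρ.withDensity negD ≤ n := by
    have h := withDensity_mono (μ := ρ) (ae_of_all _ hnegD_le)
    rwa [Measure.withDensity_rnDeriv_eq n ρ hnρ] at h
  -- singularity
  have hsing : ρ.withDensity posD ⟂ₘ ρ.withDensity negD := by
    refine ⟨Sᶜ, hSm.compl, ?_, ?_⟩
    · rw [withDensity_apply _ hSm.compl]
      have h0 : ∀ᵐ x ∂ρ.restrict Sᶜ, posD x = 0 := by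
        refine (ae_restrict_iff' hSm.compl).mpr (ae_of_all _ fun x hx => ?_)
        rw [hposDdef, Set.indicator_of_notMem (by simpa using hx)]
      rw [lintegral_congr_ae h0, lintegral_zero]
    · rw [compl_compl, withDensity_apply _ hSm]
      have h0 : ∀ᵐ x ∂ρ.restrict S, negD x = 0 := by
        refine (ae_restrict_iff' hSm).mpr (ae_of_all _ fun x hx => ?_)
        rw [hnegDdef, Set.indicator_of_notMem (by simpa using hx)]
      rw [lintegral_congr_ae h0, lintegral_zero]
  have hνpΩ : ρ.withDensity posD Ωᶜ = 0 :=
    le_antisymm (le_trans (Measure.le_iff'.mp hνple Ωᶜ) hpΩ.le) zero_le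
  have hνnΩ : ρ.withDensity negD Ωᶜ = 0 :=
    le_antisymm (le_trans (Measure.le_iff'.mp hνnle Ωᶜ) hnΩ.le) zero_le
  have hνploc : ∀ x ∈ Ω, ∃ s ∈ 𝓝 x, ρ.withDensity posD s < ⊤ := by
    intro x hx
    obtain ⟨s, hs1, hs2⟩ := hρloc x hx
    exact ⟨s, hs1, lt_of_le_of_lt (le_trans (Measure.le_iff'.mp hνple s)
      (Measure.le_iff'.mp hple s)) hs2⟩
  have hνnloc : ∀ x ∈ Ω, ∃ s ∈ 𝓝 x, ρ.withDensity negD s < ⊤ := by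
    intro x hx
    obtain ⟨s, hs1, hs2⟩ := hρloc x hx
    exact ⟨s, hs1, lt_of_le_of_lt (le_trans (Measure.le_iff'.mp hνnle s)
      (Measure.le_iff'.mp hnle s)) hs2⟩
  -- the key integral identity
  have hkey : ∀ φ : RN N → ℝ, IsTest Ω φ →
      ∫ x, φ x ∂(ρ.withDensity posD) - ∫ x, φ x ∂(ρ.withDensity negD)
        = μ.intg φ + σ.intg (fun x => (lrep u lam x).toReal * φ x) := by
    intro φ hφ
    obtain ⟨hφ1, hφ2, hφ3⟩ := hφ
    have hφcont : Continuous φ := hφ1.continuous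
    have hρT : ρ (tsupport φ) < ⊤ := hρK _ hφ2 hφ3
    have hφρ : Integrable φ ρ := integrable_of_tsupport hφcont hφ2 hρT
    have hφany : ∀ m : Measure (RN N), m ≤ ρ → Integrable φ m :=
      fun m hm => hφρ.mono_measure hm
    -- withDensity integrals
    have hwd_int : ∀ d : RN N → ℝ≥0∞, Measurable d → (∀ᵐ x ∂ρ, d x < ⊤) →
        ∫ x, φ x ∂(ρ.withDensity d) = ∫ x, (d x).toReal * φ x ∂ρ := by
      intro d hdm hdfin
      have h1 : ρ.withDensity d = ρ.withDensity (fun x => ((d x).toNNReal : ℝ≥0∞)) := by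
        apply withDensity_congr_ae
        filter_upwards [hdfin] with x hx
        rw [ENNReal.coe_toNNReal hx.ne]
      rw [h1, integral_withDensity_eq_integral_smul hdm.ennreal_toNNReal φ]
      refine integral_congr_ae (ae_of_all _ fun x => ?_)
      simp [NNReal.smul_def, ENNReal.toReal]
    have hIpos : ∫ x, φ x ∂(ρ.withDensity posD) = ∫ x, (posD x).toReal * φ x ∂ρ :=
      hwd_int posD hposDm (by
        filter_upwards [hgPfin] with x hx
        exact lt_of_le_of_lt (hposD_le x) hx)
    have hIneg : ∫ x, φ x ∂(ρ.withDensity negD) = ∫ x, (negD x).toReal * φ x ∂ρ :=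
      hwd_int negD hnegDm (by
        filter_upwards [hgNfin] with x hx
        exact lt_of_le_of_lt (hnegD_le x) hx)
    -- rnDeriv integrals
    have hIp : ∫ x, (gP x).toReal * φ x ∂ρ = ∫ x, φ x ∂p := by
      have h := integral_rnDeriv_smul (μ := p) (ν := ρ) hpρ (f := φ)
      simpa [smul_eq_mul] using h
    have hIn : ∫ x, (gN x).toReal * φ x ∂ρ = ∫ x, φ x ∂n := by
      have h := integral_rnDeriv_smul (μ := n) (ν := ρ) hnρ (f := φ)
      simpa [smul_eq_mul] using h
    have hIgP : Integrable (fun x => (gP x).toReal * φ x) ρ := by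
      have h := (integrable_rnDeriv_smul_iff (μ := p) (ν := ρ) hpρ
        (f := φ)).mpr (hφany p hple)
      simpa [smul_eq_mul] using h
    have hIgN : Integrable (fun x => (gN x).toReal * φ x) ρ := by
      have h := (integrable_rnDeriv_smul_iff (μ := n) (ν := ρ) hnρ
        (f := φ)).mpr (hφany n hnle)
      simpa [smul_eq_mul] using h
    have hIposD : Integrable (fun x => (posD x).toReal * φ x) ρ := by
      refine hIgP.mono ((hposDm.ennreal_toReal.mul hφcont.measurable).aestronglyMeasurable) ?_
      filter_upwards [hgPfin] with x hx
      rw [norm_mul, norm_mul]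
      refine mul_le_mul_of_nonneg_right ?_ (norm_nonneg _)
      rw [Real.norm_of_nonneg ENNReal.toReal_nonneg, Real.norm_of_nonneg ENNReal.toReal_nonneg]
      exact ENNReal.toReal_mono hx.ne (hposD_le x)
    have hInegD : Integrable (fun x => (negD x).toReal * φ x) ρ := by
      refine hIgN.mono ((hnegDm.ennreal_toReal.mul hφcont.measurable).aestronglyMeasurable) ?_
      filter_upwards [hgNfin] with x hx
      rw [norm_mul, norm_mul]
      refine mul_le_mul_of_nonneg_right ?_ (norm_nonneg _)
      rw [Real.norm_of_nonneg ENNReal.toReal_nonneg, Real.norm_of_nonneg ENNReal.toReal_nonneg]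
      exact ENNReal.toReal_mono hx.ne (hnegD_le x)
    have hptwise : ∀ᵐ x ∂ρ, (posD x).toReal * φ x - (negD x).toReal * φ x
        = (gP x).toReal * φ x - (gN x).toReal * φ x := by
      filter_upwards [hgPfin, hgNfin] with x hxP hxN
      have key : (posD x).toReal - (negD x).toReal = (gP x).toReal - (gN x).toReal := by
        by_cases hx : x ∈ S
        · rw [hposDdef, hnegDdef, Set.indicator_of_mem hx,
            Set.indicator_of_notMem (by simpa using hx)]
          rw [ENNReal.toReal_sub_of_le hx hxP.ne]
          simp
        · have hle : gP x ≤ gN x := le_of_not_ge (by simpa [hSdef] using hx)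
          rw [hposDdef, hnegDdef, Set.indicator_of_notMem hx,
            Set.indicator_of_mem (by simpa using hx)]
          rw [ENNReal.toReal_sub_of_le hle hxN.ne]
          simp
      rw [← sub_mul, ← sub_mul, key]
    have hsplit : ∫ x, φ x ∂(ρ.withDensity posD) - ∫ x, φ x ∂(ρ.withDensity negD)
        = ∫ x, φ x ∂p - ∫ x, φ x ∂n := by
      rw [hIpos, hIneg, ← integral_sub hIposD hInegD, integral_congr_ae hptwise,
        integral_sub hIgP hIgN, hIp, hIn]
    -- decompose p and n integrals
    have hμposle : μ.pos ≤ ρ := le_trans (le_trans (Measure.le_add_right le_rfl)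
      (Measure.le_add_right le_rfl)) hple
    have hμnegle : μ.neg ≤ ρ := le_trans (le_trans (Measure.le_add_right le_rfl)
      (Measure.le_add_right le_rfl)) hnle
    have hMpple : σ.pos.withDensity gp ≤ ρ := le_trans (le_trans (Measure.le_add_left le_rfl)
      (Measure.le_add_right le_rfl)) hple
    have hMnmle : σ.neg.withDensity gm ≤ ρ := le_trans (Measure.le_add_left le_rfl) hple
    have hMpmle : σ.pos.withDensity gm ≤ ρ := le_trans (le_trans (Measure.le_add_left le_rfl)
      (Measure.le_add_right le_rfl)) hnle
    have hMnple : σ.neg.withDensity gp ≤ ρ := le_trans (Measure.le_add_left le_rfl) hnle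
    have haddp : ∫ x, φ x ∂p = ∫ x, φ x ∂μ.pos + ∫ x, φ x ∂(σ.pos.withDensity gp)
        + ∫ x, φ x ∂(σ.neg.withDensity gm) := by
      rw [hpdef, integral_add_measure (hφany _ (le_trans (Measure.le_add_right le_rfl) hple))
        (hφany _ hMnmle), integral_add_measure (hφany _ hμposle) (hφany _ hMpple)]
    have haddn : ∫ x, φ x ∂n = ∫ x, φ x ∂μ.neg + ∫ x, φ x ∂(σ.pos.withDensity gm)
        + ∫ x, φ x ∂(σ.neg.withDensity gp) := by
      rw [hndef, integral_add_measure (hφany _ (le_trans (Measure.le_add_right le_rfl) hnle))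
        (hφany _ hMnple), integral_add_measure (hφany _ hμnegle) (hφany _ hMpmle)]
    -- σ-part: withDensity integrals as weighted integrals
    have hofRealp : ∀ m : Measure (RN N),
        ∫ x, φ x ∂(m.withDensity gp) = ∫ x, max (g x) 0 * φ x ∂m := by
      intro m
      have h1 : m.withDensity gp = m.withDensity (fun x => (((g x).toNNReal : ℝ≥0) : ℝ≥0∞)) := rfl
      rw [h1, integral_withDensity_eq_integral_smul hgmeas.real_toNNReal φ]
      refine integral_congr_ae (ae_of_all _ fun x => ?_)
      simp [NNReal.smul_def, Real.coe_toNNReal']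
    have hofRealm : ∀ m : Measure (RN N),
        ∫ x, φ x ∂(m.withDensity gm) = ∫ x, max (-g x) 0 * φ x ∂m := by
      intro m
      have h1 : m.withDensity gm = m.withDensity (fun x => (((-g x).toNNReal : ℝ≥0) : ℝ≥0∞)) := rfl
      rw [h1, integral_withDensity_eq_integral_smul (f := fun x => (-g x).toNNReal) hgmeas.neg.real_toNNReal φ]
      refine integral_congr_ae (ae_of_all _ fun x => ?_)
      simp [NNReal.smul_def, Real.coe_toNNReal']
    -- integrability of (lrep)·φ pieces
    obtain ⟨C, hC⟩ := hφcont.bounded_above_of_compact_support hφ2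
    have hfT : IntegrableOn (fun x => (lrep u lam x).toReal) (tsupport φ) σ.var :=
      (hXσ _ hφ2 hφ3).2
    have hfφT : IntegrableOn (fun x => (lrep u lam x).toReal * φ x) (tsupport φ) σ.var := by
      have h := Integrable.bdd_mul (c := C) hfT
        (hφcont.aestronglyMeasurable.restrict) (ae_of_all _ hC)
      exact h.congr (ae_of_all _ fun x => mul_comm _ _)
    have hfφ : Integrable (fun x => (lrep u lam x).toReal * φ x) σ.var := by
      have heq : (fun x => (lrep u lam x).toReal * φ x)
          = (tsupport φ).indicator (fun x => (lrep u lam x).toReal * φ x) := by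
        funext x
        by_cases hx : x ∈ tsupport φ
        · rw [Set.indicator_of_mem hx]
        · rw [Set.indicator_of_notMem hx, image_eq_zero_of_notMem_tsupport hx, mul_zero]
      rw [heq, integrable_indicator_iff (isClosed_tsupport φ).measurableSet]
      exact hfφT
    have hgφpos : Integrable (fun x => g x * φ x) σ.pos :=
      (hfφ.mono_measure hσposle).congr (by
        filter_upwards [hgaepos] with x hx
        rw [hx])
    have hgφneg : Integrable (fun x => g x * φ x) σ.neg :=
      (hfφ.mono_measure hσnegle).congr (by
        filter_upwards [hgaeneg] with x hx
        rw [hx])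
    have hmaxmono : ∀ (m : Measure (RN N)), Integrable (fun x => g x * φ x) m →
        Integrable (fun x => max (g x) 0 * φ x) m := by
      intro m hm
      refine hm.mono (((hgmeas.max measurable_const).mul
        hφcont.measurable).aestronglyMeasurable) (ae_of_all _ fun x => ?_)
      rw [norm_mul, norm_mul]
      exact mul_le_mul_of_nonneg_right (by
        rw [Real.norm_eq_abs, Real.norm_eq_abs]; exact abs_max_le' (g x)) (norm_nonneg _)
    have hminmono : ∀ (m : Measure (RN N)), Integrable (fun x => g x * φ x) m →
        Integrable (fun x => max (-g x) 0 * φ x) m := by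
      intro m hm
      refine hm.mono (((hgmeas.neg.max measurable_const).mul
        hφcont.measurable).aestronglyMeasurable) (ae_of_all _ fun x => ?_)
      rw [norm_mul, norm_mul]
      refine mul_le_mul_of_nonneg_right ?_ (norm_nonneg _)
      rw [Real.norm_eq_abs, Real.norm_eq_abs]
      calc |max (-g x) 0| ≤ |(-g x)| := abs_max_le' (-g x)
        _ = |g x| := abs_neg _
    have hcomb : ∀ (m : Measure (RN N)), Integrable (fun x => g x * φ x) m →
        ∫ x, max (g x) 0 * φ x ∂m - ∫ x, max (-g x) 0 * φ x ∂m = ∫ x, g x * φ x ∂m := by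
      intro m hm
      rw [← integral_sub (hmaxmono m hm) (hminmono m hm)]
      refine integral_congr_ae (ae_of_all _ fun x => ?_)
      show max (g x) 0 * φ x - max (-g x) 0 * φ x = g x * φ x
      rw [← sub_mul]
      congr 1
      rcases le_total (g x) 0 with h | h
      · rw [max_eq_right h, max_eq_left (by linarith)]; ring
      · rw [max_eq_left h, max_eq_right (by linarith)]; ring
    have hgfpos : ∫ x, g x * φ x ∂σ.pos = ∫ x, (lrep u lam x).toReal * φ x ∂σ.pos :=
      integral_congr_ae (by
        filter_upwards [hgaepos] with x hx
        rw [hx])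
    have hgfneg : ∫ x, g x * φ x ∂σ.neg = ∫ x, (lrep u lam x).toReal * φ x ∂σ.neg :=
      integral_congr_ae (by
        filter_upwards [hgaeneg] with x hx
        rw [hx])
    have e1 := hcomb σ.pos hgφpos
    have e2 := hcomb σ.neg hgφneg
    rw [hsplit, haddp, haddn, hofRealp σ.pos, hofRealp σ.neg, hofRealm σ.pos, hofRealm σ.neg]
    simp only [LocM.intg]
    rw [hgfpos] at e1
    rw [hgfneg] at e2
    linarith
  -- conclude
  refine ⟨⟨ρ.withDensity posD, ρ.withDensity negD, hsing, hνpΩ, hνnΩ, hνploc, hνnloc⟩, ?_, ?_⟩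
  · intro φ hφt
    have h1 := hμ φ hφt
    have h2 := hkey φ hφt
    simp only [pairing] at h1
    show (∫ x, φ x ∂(ρ.withDensity posD)) - ∫ x, φ x ∂(ρ.withDensity negD) = _
    linarith
  · intro φ hφt
    have h1 := hμ φ hφt
    have h2 := hkey φ hφt
    simp only [pairing] at h1
    have h3 : LocM.intg ⟨ρ.withDensity posD, ρ.withDensity negD, hsing, hνpΩ, hνnΩ, hνploc,
        hνnloc⟩ φ = ∫ x, φ x ∂(ρ.withDensity posD) - ∫ x, φ x ∂(ρ.withDensity negD) := rfl
    rw [h3]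
    linarith
end
end

section
/- Let A ∈ DM_loc^1(Ω) with |div A| ≪ L^N. Then for any two Borel functions λ₁, λ₂ : Ω → [0,1], BV_loc^{A,λ₁}(Ω) = BV_loc^{A,λ₂}(Ω), and for u in this common class, (A, Du)_{λ₁} = (A, Du)_{λ₂} = -u div A + div(uA) as measures. In particular, the map u ↦ (A, Du) is additive. -/
open MeasureTheory Filter Topology Metric Set ENNReal NNReal

noncomputable section

namespace Stmt8Aux

variable {N : ℕ}

lemma vol_closedBall_inter (E : Set (RN N)) (x : RN N) {r : ℝ} (hr : 0 < r) :
    volume (E ∩ closedBall x r) = volume (E ∩ ball x r) := by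
  refine le_antisymm ?_ (measure_mono (inter_subset_inter_right _ ball_subset_closedBall))
  calc volume (E ∩ closedBall x r) ≤ volume ((E ∩ ball x r) ∪ sphere x r) := by
        refine measure_mono ?_
        intro y hy
        rw [← ball_union_sphere] at hy
        rcases hy.2 with h | h
        · exact Or.inl ⟨hy.1, h⟩
        · exact Or.inr h
    _ ≤ volume (E ∩ ball x r) + volume (sphere x r) := measure_union_le _ _
    _ = volume (E ∩ ball x r) := by
        rw [Measure.addHaar_sphere_of_ne_zero volume x hr.ne', add_zero]

lemma hasDensity_of_tendsto {E : Set (RN N)} {x : RN N} {d : ℝ≥0∞} (hd : d ≠ ⊤)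
    (h : Tendsto (fun r => volume (E ∩ closedBall x r) / volume (closedBall x r)) (𝓝[>] 0)
      (𝓝 d)) : hasDensity E x d.toReal := by
  have h2 := (ENNReal.tendsto_toReal hd).comp h
  refine h2.congr' ?_
  filter_upwards [self_mem_nhdsWithin] with r (hr : r ∈ Ioi 0)
  have hb : volume (closedBall x r) = volume (ball x r) := by
    simpa using vol_closedBall_inter univ x hr
  simp only [Function.comp_apply, ENNReal.toReal_div, vol_closedBall_inter E x hr, hb]

lemma density_points {S : Set (RN N)} (hS : MeasurableSet S) :
    ∀ᵐ x ∂(volume : Measure (RN N)), x ∈ S → hasDensity S x 1 ∧ hasDensity Sᶜ x 0 := by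
  filter_upwards [Besicovitch.ae_tendsto_measure_inter_div_of_measurableSet volume hS,
    Besicovitch.ae_tendsto_measure_inter_div_of_measurableSet volume hS.compl] with x h1 h2 hx
  have hx' : x ∉ Sᶜ := fun h => h hx
  constructor
  · have h1' : Tendsto (fun r => volume (S ∩ closedBall x r) / volume (closedBall x r))
        (𝓝[>] (0:ℝ)) (𝓝 1) := by simpa [Set.indicator_of_mem hx] using h1
    simpa using hasDensity_of_tendsto one_ne_top h1'
  · have h2' : Tendsto (fun r => volume (Sᶜ ∩ closedBall x r) / volume (closedBall x r))
        (𝓝[>] (0:ℝ)) (𝓝 0) := by simpa [Set.indicator_of_notMem hx'] using h2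
    simpa using hasDensity_of_tendsto zero_ne_top h2'

lemma ratio_mono {E F : Set (RN N)} (hEF : E ⊆ F) (x : RN N) {r : ℝ} (hr : 0 < r) :
    (volume (E ∩ ball x r)).toReal / (volume (ball x r)).toReal ≤
      (volume (F ∩ ball x r)).toReal / (volume (ball x r)).toReal := by
  have hnum : (volume (E ∩ ball x r)).toReal ≤ (volume (F ∩ ball x r)).toReal :=
    ENNReal.toReal_mono ((measure_mono inter_subset_right).trans_lt measure_ball_lt_top).ne
      (measure_mono (inter_subset_inter_left _ hEF))
  have hden : (0:ℝ) < (volume (ball x r)).toReal :=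
    ENNReal.toReal_pos (measure_ball_pos volume x hr).ne' measure_ball_lt_top.ne
  exact div_le_div_of_nonneg_right hnum hden.le

lemma hasDensity_zero_mono {E F : Set (RN N)} {x : RN N} (hEF : E ⊆ F)
    (hF : hasDensity F x 0) : hasDensity E x 0 := by
  refine squeeze_zero' ?_ ?_ hF
  · filter_upwards with r; positivity
  · filter_upwards [self_mem_nhdsWithin] with r (hr : r ∈ Ioi 0)
    exact ratio_mono hEF x hr

lemma not_hasDensity_zero_of_superset {F E : Set (RN N)} {x : RN N} (hFE : F ⊆ E)
    (hF : hasDensity F x 1) : ¬ hasDensity E x 0 := by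
  intro hE
  have : (1:ℝ) ≤ 0 := by
    refine le_of_tendsto_of_tendsto hF hE ?_
    filter_upwards [self_mem_nhdsWithin] with r (hr : r ∈ Ioi 0)
    exact ratio_mono hFE x hr
  linarith

lemma rat_btwn_left {a : EReal} {b : ℝ} (h : a < (b : EReal)) :
    ∃ q : ℚ, a < ((q : ℝ) : EReal) ∧ (q : ℝ) ≤ b := by
  induction a using EReal.rec with
  | bot =>
    obtain ⟨q, hq⟩ := exists_rat_lt b
    exact ⟨q, bot_lt_iff_ne_bot.2 (by simp), hq.le⟩
  | coe a =>
    obtain ⟨q, h1, h2⟩ := exists_rat_btwn (EReal.coe_lt_coe_iff.mp h)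
    exact ⟨q, EReal.coe_lt_coe_iff.2 h1, h2.le⟩
  | top => exact absurd h (by simp)

lemma rat_btwn_right {a : ℝ} {b : EReal} (h : (a : EReal) < b) :
    ∃ q : ℚ, a ≤ (q : ℝ) ∧ ((q : ℝ) : EReal) < b := by
  induction b using EReal.rec with
  | bot => exact absurd h (by simp)
  | coe b =>
    obtain ⟨q, h1, h2⟩ := exists_rat_btwn (EReal.coe_lt_coe_iff.mp h)
    exact ⟨q, h1.le, EReal.coe_lt_coe_iff.2 h2⟩
  | top =>
    obtain ⟨q, hq⟩ := exists_rat_gt a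
    exact ⟨q, hq.le, lt_top_iff_ne_top.2 (by simp)⟩

lemma approx_ae {u : RN N → ℝ} (hu : Measurable u) :
    ∀ᵐ x ∂(volume : Measure (RN N)),
      aliminf u x = (u x : EReal) ∧ alimsup u x = (u x : EReal) := by
  have key : ∀ᵐ x ∂(volume : Measure (RN N)), ∀ q : ℚ,
      (u x ≤ (q:ℝ) → hasDensity {y | (q:ℝ) < u y} x 0 ∧ hasDensity {y | u y ≤ (q:ℝ)} x 1) ∧
      ((q:ℝ) ≤ u x → hasDensity {y | u y < (q:ℝ)} x 0 ∧ hasDensity {y | (q:ℝ) ≤ u y} x 1) := by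
    rw [ae_all_iff]
    intro q
    have hS : MeasurableSet {y | u y ≤ (q:ℝ)} := measurableSet_le hu measurable_const
    have hT : MeasurableSet {y | (q:ℝ) ≤ u y} := measurableSet_le measurable_const hu
    have e1 : {y | (q:ℝ) < u y} = {y | u y ≤ (q:ℝ)}ᶜ := by ext y; simp [not_le]
    have e2 : {y | u y < (q:ℝ)} = {y | (q:ℝ) ≤ u y}ᶜ := by ext y; simp [not_le]
    filter_upwards [density_points hS, density_points hT] with x h1 h2
    constructor
    · intro hx
      obtain ⟨hd1, hd0⟩ := h1 hx
      exact ⟨e1 ▸ hd0, hd1⟩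
    · intro hx
      obtain ⟨hd1, hd0⟩ := h2 hx
      exact ⟨e2 ▸ hd0, hd1⟩
  filter_upwards [key] with x hx
  constructor
  · apply le_antisymm
    · apply sSup_le
      intro t ht
      by_contra hlt
      push_neg at hlt
      obtain ⟨q, hq1, hq2⟩ := rat_btwn_right hlt
      have hsub : {y | u y ≤ (q:ℝ)} ⊆ {y | (u y : EReal) < t} := fun y hy =>
        lt_of_le_of_lt (EReal.coe_le_coe_iff.2 hy) hq2
      exact not_hasDensity_zero_of_superset hsub ((hx q).1 hq1).2 ht
    · apply le_of_forall_lt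
      intro c hc
      obtain ⟨q, hq1, hq2⟩ := rat_btwn_left hc
      have hmem : ((q:ℝ) : EReal) ∈ {t : EReal | hasDensity {y | ((u y : EReal)) < t} x 0} := by
        have h0 := ((hx q).2 hq2).1
        have e : {y | (u y : EReal) < ((q:ℝ):EReal)} = {y | u y < (q:ℝ)} := by
          ext y; simp [EReal.coe_lt_coe_iff]
        simpa [aliminf, e] using h0
      exact lt_of_lt_of_le hq1 (le_sSup hmem)
  · apply le_antisymm
    · apply le_of_forall_gt_imp_ge_of_dense
      intro t ht
      obtain ⟨q, hq1, hq2⟩ := rat_btwn_right ht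
      refine sInf_le ?_
      refine hasDensity_zero_mono ?_ ((hx q).1 hq1).1
      intro y hy
      exact EReal.coe_lt_coe_iff.mp (hq2.trans hy)
    · apply le_sInf
      intro t ht
      by_contra hlt
      push_neg at hlt
      obtain ⟨q, hq1, hq2⟩ := rat_btwn_left hlt
      have hsub : {y | (q:ℝ) ≤ u y} ⊆ {y | t < (u y : EReal)} := fun y hy =>
        hq1.trans_le (EReal.coe_le_coe_iff.2 hy)
      exact not_hasDensity_zero_of_superset hsub ((hx q).2 hq2).2 ht

lemma lrep_ae (u lam : RN N → ℝ) (hu : Measurable u) :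
    ∀ᵐ x ∂(volume : Measure (RN N)), lrep u lam x = ((u x : ℝ) : EReal) := by
  filter_upwards [approx_ae hu] with x hx
  obtain ⟨h1, h2⟩ := hx
  unfold lrep
  rw [if_neg (by rw [h2]; simp)]
  rw [h1, h2, ← EReal.coe_mul, ← EReal.coe_mul, ← EReal.coe_add]
  exact congrArg _ (by ring)

end Stmt8Aux

open Stmt8Aux

/-- for `A ∈ DM_loc^1(Ω)` with `|div A| ≪ L^N`, the classes
`BV_loc^{A,λ}` do not depend on `λ`, all the `λ`-pairings coincide and equal
`-u div A + div(uA)`, and the pairing is additive in `u`. -/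
theorem stmt8 {N : ℕ} (Ω : Set (RN N)) (hΩ : IsOpen Ω)
    (a : RN N → RN N) (ha : LocallyIntegrableOn a Ω volume)
    (σ : LocM N Ω) (hdiv : IsDivergenceD Ω a σ)
    (habs : σ.pos ≪ volume ∧ σ.neg ≪ volume)
    (lam1 lam2 : RN N → ℝ) (h1 : IsLam lam1) (h2 : IsLam lam2) :
    (∀ u : RN N → ℝ, Measurable u →
      (BVlocD Ω a σ u lam1 ↔ BVlocD Ω a σ u lam2)) ∧
    (∀ u : RN N → ℝ, Measurable u → BVlocD Ω a σ u lam1 →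
      ∀ φ, IsTest1 Ω φ →
        pairingD Ω a σ u lam1 φ = pairingD Ω a σ u lam2 φ ∧
        pairingD Ω a σ u lam1 φ =
          - σ.intg (fun x => u x * φ x) - ∫ x in Ω, u x * fderiv ℝ φ x (a x)) ∧
    (∀ u v : RN N → ℝ, Measurable u → Measurable v →
      BVlocD Ω a σ u lam1 → BVlocD Ω a σ v lam1 →
      ∀ φ, IsTest1 Ω φ →
        pairingD Ω a σ (u + v) lam1 φ
          = pairingD Ω a σ u lam1 φ + pairingD Ω a σ v lam1 φ) := by
  obtain ⟨hp, hn⟩ := habs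
  have hvar : σ.var ≪ volume := by
    intro s hs
    simp [LocM.var, Measure.add_apply, hp hs, hn hs]
  have hvm : vmeas Ω a ≪ volume :=
    (withDensity_absolutelyContinuous _ _).trans Measure.restrict_le_self.absolutelyContinuous
  have hro : (volume.restrict Ω : Measure (RN N)) ≪ volume :=
    Measure.restrict_le_self.absolutelyContinuous
  -- a.e. identification of the λ-representative with u
  have hAE' : ∀ (ν : Measure (RN N)), ν ≪ volume → ∀ (u lam : RN N → ℝ), Measurable u →
      ∀ᵐ x ∂ν, lrep u lam x = ((u x : ℝ) : EReal) := fun ν hν u lam hu =>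
    hν.ae_le (lrep_ae u lam hu)
  have hAE : ∀ (ν : Measure (RN N)), ν ≪ volume → ∀ (u lam : RN N → ℝ), Measurable u →
      (fun x => (lrep u lam x).toReal) =ᵐ[ν] u := by
    intro ν hν u lam hu
    filter_upwards [hAE' ν hν u lam hu] with x hx
    rw [hx]; exact EReal.toReal_coe _
  -- the pairing is λ-independent and equals the natural expression
  have hpair : ∀ (u lam : RN N → ℝ), Measurable u → ∀ φ : RN N → ℝ,
      pairingD Ω a σ u lam φ =
        - σ.intg (fun x => u x * φ x) - ∫ x in Ω, u x * fderiv ℝ φ x (a x) := by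
    intro u lam hu φ
    have c : ∀ (ν : Measure (RN N)), ν ≪ volume → ∀ g : RN N → ℝ,
        ∫ x, (lrep u lam x).toReal * g x ∂ν = ∫ x, u x * g x ∂ν := by
      intro ν hν g
      refine integral_congr_ae ?_
      filter_upwards [hAE ν hν u lam hu] with x hx
      rw [hx]
    unfold pairingD LocM.intg
    rw [c σ.pos hp φ, c σ.neg hn φ, c (volume.restrict Ω) hro (fun x => fderiv ℝ φ x (a x))]
  -- transfer of Fin1loc
  have hfin : ∀ (ν : Measure (RN N)), ν ≪ volume → ∀ (u lamA lamB : RN N → ℝ), Measurable u →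
      Fin1loc Ω (lrep u lamA) ν → Fin1loc Ω (lrep u lamB) ν := by
    intro ν hν u lamA lamB hu hF K hK hKΩ
    obtain ⟨-, hint⟩ := hF K hK hKΩ
    have eA : ∀ᵐ x ∂ν.restrict K, lrep u lamA x = ((u x : ℝ) : EReal) :=
      ae_restrict_of_ae (hAE' ν hν u lamA hu)
    have eB : ∀ᵐ x ∂ν.restrict K, lrep u lamB x = ((u x : ℝ) : EReal) :=
      ae_restrict_of_ae (hAE' ν hν u lamB hu)
    constructor
    · filter_upwards [eB] with x hx
      rw [hx]; exact ⟨EReal.coe_ne_top _, EReal.coe_ne_bot _⟩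
    · refine hint.congr ?_
      filter_upwards [eA, eB] with x hA hB
      rw [hA, hB]
  have hBV : ∀ (u lamA lamB : RN N → ℝ), Measurable u →
      BVlocD Ω a σ u lamA → BVlocD Ω a σ u lamB := by
    rintro u lamA lamB hu ⟨⟨hf1, hf2⟩, μ, hμ⟩
    refine ⟨⟨hfin _ hvm u lamA lamB hu hf1, hfin _ hvar u lamA lamB hu hf2⟩, μ, fun φ hφ => ?_⟩
    rw [hpair u lamB hu φ, ← hpair u lamA hu φ]
    exact hμ φ hφ
  refine ⟨fun u hu => ⟨hBV u lam1 lam2 hu, hBV u lam2 lam1 hu⟩, ?_, ?_⟩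
  · intro u hu _ φ _
    exact ⟨by rw [hpair u lam1 hu φ, hpair u lam2 hu φ], hpair u lam1 hu φ⟩
  · intro u v hu hv hBVu hBVv φ hφ
    have huv : Measurable (u + v) := hu.add hv
    obtain ⟨hφ1, hφ2, hφ3⟩ := hφ
    set K := tsupport φ with hKdef
    have hKc : IsCompact K := hφ2
    have hKΩ : K ⊆ Ω := hφ3
    have hKm : MeasurableSet K := (isClosed_tsupport φ).measurableSet
    -- integrability on K of u and v w.r.t. the relevant measures
    have int_var : ∀ w : RN N → ℝ, Measurable w → BVlocD Ω a σ w lam1 →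
        IntegrableOn w K σ.var := by
      intro w hw hB
      obtain ⟨-, hint⟩ := hB.1.2 K hKc hKΩ
      exact hint.congr (ae_restrict_of_ae (hAE σ.var hvar w lam1 hw))
    have int_vm : ∀ w : RN N → ℝ, Measurable w → BVlocD Ω a σ w lam1 →
        IntegrableOn w K (vmeas Ω a) := by
      intro w hw hB
      obtain ⟨-, hint⟩ := hB.1.1 K hKc hKΩ
      exact hint.congr (ae_restrict_of_ae (hAE (vmeas Ω a) hvm w lam1 hw))
    -- bound on φ
    have hφbd : ∃ C, ∀ x, ‖φ x‖ ≤ C := hφ2.exists_bound_of_continuous hφ1.continuous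
    -- multiplication with φ is integrable w.r.t. σ.pos and σ.neg
    have mulint : ∀ w : RN N → ℝ, Measurable w → IntegrableOn w K σ.var →
        ∀ ν : Measure (RN N), ν ≤ σ.var → Integrable (fun x => w x * φ x) ν := by
      intro w hw hwint ν hν
      have hwK : IntegrableOn w K ν :=
        Integrable.mono_measure hwint (Measure.restrict_mono (subset_refl K) hν)
      have hmul : IntegrableOn (fun x => φ x * w x) K ν :=
        hwK.bdd_mul hφ1.continuous.aestronglyMeasurable (ae_of_all _ hφbd.choose_spec)
      have hmul' : IntegrableOn (fun x => w x * φ x) K ν := by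
        simpa [mul_comm] using hmul
      have heq : (fun x => w x * φ x) = K.indicator (fun x => w x * φ x) := by
        funext x
        by_cases hx : x ∈ K
        · rw [Set.indicator_of_mem hx]
        · rw [Set.indicator_of_notMem hx, image_eq_zero_of_notMem_tsupport hx, mul_zero]
      rw [heq, integrable_indicator_iff hKm]
      exact hmul'
    have hple : σ.pos ≤ σ.var := Measure.le_add_right le_rfl
    have hnle : σ.neg ≤ σ.var := Measure.le_add_left le_rfl
    -- integrability for the volume integral
    have hfd_cont : Continuous (fderiv ℝ φ) := hφ1.continuous_fderiv one_ne_zero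
    have hfd_bd : ∃ C, ∀ x, ‖fderiv ℝ φ x‖ ≤ C :=
      (hφ2.fderiv ℝ).exists_bound_of_continuous hfd_cont
    have haesm_a : AEStronglyMeasurable a (volume.restrict Ω) :=
      ha.aestronglyMeasurable
    have g_aesm : AEStronglyMeasurable (fun x => fderiv ℝ φ x (a x)) (volume.restrict Ω) := by
      have hc : Continuous fun p : ((RN N) →L[ℝ] ℝ) × RN N => p.1 p.2 :=
        isBoundedBilinearMap_apply.continuous
      exact hc.comp_aestronglyMeasurable
        ((hfd_cont.aestronglyMeasurable).prodMk haesm_a)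
    have volint : ∀ w : RN N → ℝ, Measurable w → IntegrableOn w K (vmeas Ω a) →
        Integrable (fun x => w x * fderiv ℝ φ x (a x)) (volume.restrict Ω) := by
      intro w hw hwv
      rw [show vmeas Ω a = (volume.restrict Ω).withDensity (fun x => ((‖a x‖₊ : ℝ≥0) : ℝ≥0∞))
            from rfl] at hwv
      rw [IntegrableOn, restrict_withDensity hKm,
        integrable_withDensity_iff_integrable_coe_smul₀
          ((haesm_a.restrict.nnnorm).aemeasurable)] at hwv
      obtain ⟨C, hC⟩ := hfd_bd
      have hC0 : 0 ≤ C := (norm_nonneg _).trans (hC Classical.ofNonempty)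
      have hmain : IntegrableOn (fun x => w x * fderiv ℝ φ x (a x)) K (volume.restrict Ω) := by
        refine Integrable.mono' (hwv.norm.const_mul C) ?_ ?_
        · exact (hw.aestronglyMeasurable.mul g_aesm).restrict
        · filter_upwards with x
          have hb1 : ‖fderiv ℝ φ x (a x)‖ ≤ ‖fderiv ℝ φ x‖ * ‖a x‖ :=
            (fderiv ℝ φ x).le_opNorm (a x)
          have hb2 : ‖fderiv ℝ φ x‖ ≤ C := hC x
          have : ‖w x * fderiv ℝ φ x (a x)‖ ≤ |w x| * (C * ‖a x‖) := by
            rw [norm_mul]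
            refine mul_le_mul_of_nonneg_left (hb1.trans ?_) (abs_nonneg _)
            exact mul_le_mul_of_nonneg_right hb2 (norm_nonneg _)
          refine this.trans (le_of_eq ?_)
          rw [norm_smul]
          simp [norm_norm, abs_mul, abs_of_nonneg (norm_nonneg (a x))]
          ring
      have heq : (fun x => w x * fderiv ℝ φ x (a x)) =
          K.indicator (fun x => w x * fderiv ℝ φ x (a x)) := by
        funext x
        by_cases hx : x ∈ K
        · rw [Set.indicator_of_mem hx]
        · rw [Set.indicator_of_notMem hx]
          have : fderiv ℝ φ x = 0 := by
            by_contra h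
            exact hx (support_fderiv_subset ℝ h)
          rw [this]; simp
      rw [heq, integrable_indicator_iff hKm]
      exact hmain
    -- put everything together
    have hIu := int_var u hu hBVu
    have hIv := int_var v hv hBVv
    have hVu := volint u hu (int_vm u hu hBVu)
    have hVv := volint v hv (int_vm v hv hBVv)
    rw [hpair (u + v) lam1 huv φ, hpair u lam1 hu φ, hpair v lam1 hv φ]
    have hsplit : σ.intg (fun x => (u + v) x * φ x)
        = σ.intg (fun x => u x * φ x) + σ.intg (fun x => v x * φ x) := by
      unfold LocM.intg
      have e : (fun x => (u + v) x * φ x) = fun x => u x * φ x + v x * φ x := by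
        funext x; simp [Pi.add_apply]; ring
      rw [e, integral_add (mulint u hu hIu σ.pos hple) (mulint v hv hIv σ.pos hple),
        integral_add (mulint u hu hIu σ.neg hnle) (mulint v hv hIv σ.neg hnle)]
      ring
    have hvsplit : ∫ x in Ω, (u + v) x * fderiv ℝ φ x (a x)
        = (∫ x in Ω, u x * fderiv ℝ φ x (a x)) + ∫ x in Ω, v x * fderiv ℝ φ x (a x) := by
      have e : (fun x => (u + v) x * fderiv ℝ φ x (a x))
          = fun x => u x * fderiv ℝ φ x (a x) + v x * fderiv ℝ φ x (a x) := by
        funext x; simp [Pi.add_apply]; ring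
      rw [show (∫ x in Ω, (u + v) x * fderiv ℝ φ x (a x))
          = ∫ x in Ω, (u x * fderiv ℝ φ x (a x) + v x * fderiv ℝ φ x (a x)) from by rw [← e]]
      exact integral_add hVu hVv
    rw [hsplit, hvsplit]
    ring
end
end

section
/- Let A ∈ DM_loc^1(Ω) and E ⊂ Ω Borel with χ_E ∈ BV_loc^{A,λ}(Ω) for some Borel λ : Ω → [0,1]. Then div A restricted to ∂*E equals (A, Dχ_E)_0 - (A, Dχ_E)_1 as measures on Ω. -/
open MeasureTheory Filter Topology Metric Set ENNReal NNReal

noncomputable section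

/-- `χ_E ∈ BV_loc^{A,λ}(Ω)` for a density field `a`. -/
def SetBVlocD {N : ℕ} (Ω : Set (RN N)) (a : RN N → RN N) (σ : LocM N Ω)
    (E : Set (RN N)) (lam : RN N → ℝ) : Prop :=
  (∀ K : Set (RN N), IsCompact K → K ⊆ Ω →
    IntegrableOn (chiLam E lam) K (vmeas Ω a) ∧ IntegrableOn (chiLam E lam) K σ.var) ∧
  ∃ μ : LocM N Ω, ∀ φ, IsTest Ω φ → pairingSetD Ω a σ E lam φ = μ.intg φ

section Stmt16Aux

variable {N : ℕ}

lemma stmt16_measA {E : Set (RN N)} (hE : MeasurableSet E) (r : ℝ) :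
    Measurable fun x : RN N => volume (E ∩ ball x r) := by
  have hset : MeasurableSet {p : RN N × RN N | p.2 ∈ E ∧ dist p.2 p.1 < r} := by
    refine (hE.preimage measurable_snd).inter ?_
    exact (isOpen_lt (continuous_snd.dist continuous_fst) continuous_const).measurableSet
  have : (fun x : RN N => volume (E ∩ ball x r))
      = fun x => volume (Prod.mk x ⁻¹' {p : RN N × RN N | p.2 ∈ E ∧ dist p.2 p.1 < r}) := by
    funext x; congr 1
  rw [this]
  exact measurable_measure_prodMk_left hset

def stmt16F (E : Set (RN N)) (x : RN N) (r : ℝ) : ℝ :=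
  (volume (E ∩ ball x r)).toReal / (volume (ball x r)).toReal

lemma stmt16_measF {E : Set (RN N)} (hE : MeasurableSet E) (r : ℝ) :
    Measurable fun x : RN N => stmt16F E x r := by
  unfold stmt16F
  refine Measurable.div ?_ ?_
  · exact (stmt16_measA hE r).ennreal_toReal
  · have : (fun x : RN N => volume (ball x r)) = fun x => volume (univ ∩ ball x r) := by
      simp
    exact (this ▸ (stmt16_measA MeasurableSet.univ r)).ennreal_toReal

lemma stmt16_contB (x : RN N) {r₀ : ℝ} (h : 0 < r₀) :
    ContinuousAt (fun r => (volume (ball x r)).toReal) r₀ := by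
  have hev : ∀ᶠ r in 𝓝 r₀, (volume (ball x r)).toReal
      = r ^ (Module.finrank ℝ (RN N)) * (volume (ball (0 : RN N) 1)).toReal := by
    filter_upwards [eventually_gt_nhds h] with r hr
    rw [Measure.addHaar_ball_of_pos volume x hr, ENNReal.toReal_mul,
      ENNReal.toReal_ofReal (pow_nonneg hr.le _)]
  exact (((continuous_pow _).mul continuous_const).continuousAt).congr (EventuallyEq.symm hev)

lemma stmt16_distA (E : Set (RN N)) (x : RN N) (r r' : ℝ) :
    dist (volume (E ∩ ball x r')).toReal (volume (E ∩ ball x r)).toReal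
      ≤ dist (volume (ball x r')).toReal (volume (ball x r)).toReal := by
  wlog hrr : r ≤ r' generalizing r r'
  · rw [dist_comm, dist_comm (volume (ball x r')).toReal]
    exact this r' r (le_of_not_ge hrr)
  have hb : ball x r ⊆ ball x r' := ball_subset_ball hrr
  have hfin : ∀ s : Set (RN N), volume (s ∩ ball x r') ≠ ⊤ := fun s =>
    (lt_of_le_of_lt (measure_mono Set.inter_subset_right) measure_ball_lt_top).ne
  have hfinB : volume (ball x r') ≠ ⊤ := measure_ball_lt_top.ne
  have hfinB' : volume (ball x r) ≠ ⊤ := measure_ball_lt_top.ne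
  have hmonoA : (volume (E ∩ ball x r)).toReal ≤ (volume (E ∩ ball x r')).toReal :=
    ENNReal.toReal_mono (hfin E) (measure_mono (Set.inter_subset_inter_right E hb))
  have hmonoB : (volume (ball x r)).toReal ≤ (volume (ball x r')).toReal :=
    ENNReal.toReal_mono hfinB (measure_mono hb)
  rw [Real.dist_eq, Real.dist_eq, abs_of_nonneg (by linarith), abs_of_nonneg (by linarith)]
  -- key: vol(E∩B') ≤ vol(E∩B) + (vol B' - vol B)
  have hsub : E ∩ ball x r' ⊆ (E ∩ ball x r) ∪ (ball x r' \ ball x r) := by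
    intro y hy
    by_cases hyb : y ∈ ball x r
    · exact Or.inl ⟨hy.1, hyb⟩
    · exact Or.inr ⟨hy.2, hyb⟩
  have hdiff : volume (ball x r' \ ball x r) = volume (ball x r') - volume (ball x r) :=
    measure_diff hb measurableSet_ball.nullMeasurableSet hfinB'
  have hkey : volume (E ∩ ball x r') ≤ volume (E ∩ ball x r)
      + (volume (ball x r') - volume (ball x r)) := by
    calc volume (E ∩ ball x r') ≤ volume ((E ∩ ball x r) ∪ (ball x r' \ ball x r)) :=
          measure_mono hsub
      _ ≤ volume (E ∩ ball x r) + volume (ball x r' \ ball x r) := measure_union_le _ _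
      _ = _ := by rw [hdiff]
  have hfinE : volume (E ∩ ball x r) ≠ ⊤ :=
    (lt_of_le_of_lt (measure_mono Set.inter_subset_right) measure_ball_lt_top).ne
  have := ENNReal.toReal_mono (by
      refine ENNReal.add_ne_top.2 ⟨hfinE, ?_⟩
      exact (tsub_le_self.trans_lt measure_ball_lt_top).ne) hkey
  rw [ENNReal.toReal_add hfinE (tsub_le_self.trans_lt measure_ball_lt_top).ne,
    ENNReal.toReal_sub_of_le (measure_mono hb) hfinB] at this
  linarith

lemma stmt16_contF (E : Set (RN N)) (x : RN N) {r₀ : ℝ} (h : 0 < r₀) :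
    ContinuousAt (fun r => stmt16F E x r) r₀ := by
  have hA : ContinuousAt (fun r => (volume (E ∩ ball x r)).toReal) r₀ := by
    rw [Metric.continuousAt_iff']
    intro ε hε
    have hB := stmt16_contB x h
    rw [Metric.continuousAt_iff'] at hB
    filter_upwards [hB ε hε] with r hr
    exact lt_of_le_of_lt (stmt16_distA E x r₀ r) hr
  have hB := stmt16_contB x h
  have hBne : (volume (ball x r₀)).toReal ≠ 0 :=
    (ENNReal.toReal_pos (measure_ball_pos volume x h).ne' measure_ball_lt_top.ne).ne'
  exact hA.div hB hBne


lemma stmt16_hasDensity_char (E : Set (RN N)) (x : RN N) (d : ℝ) :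
    hasDensity E x d ↔ ∀ k : ℕ, ∃ n : ℕ, ∀ q : ℚ, 0 < (q : ℝ) → (q : ℝ) < 1 / (n + 1) →
      |stmt16F E x q - d| ≤ 1 / (k + 1) := by
  have hiff : hasDensity E x d ↔ Tendsto (stmt16F E x) (𝓝[>] (0:ℝ)) (𝓝 d) := Iff.rfl
  rw [hiff, Metric.tendsto_nhdsWithin_nhds]
  constructor
  · intro h k
    obtain ⟨δ, hδ, hd⟩ := h (1 / (k + 1)) (by positivity)
    obtain ⟨n, hn⟩ := exists_nat_one_div_lt hδ
    refine ⟨n, fun q hq0 hqn => ?_⟩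
    have : dist (q : ℝ) 0 < δ := by
      rw [Real.dist_eq, sub_zero, abs_of_pos hq0]; linarith
    have := hd (Set.mem_Ioi.2 hq0) this
    rw [Real.dist_eq] at this; linarith
  · intro h ε hε
    obtain ⟨k, hk⟩ := exists_nat_one_div_lt hε
    obtain ⟨n, hn⟩ := h k
    refine ⟨1 / (n + 1), by positivity, fun {r} hr hrd => ?_⟩
    have hr0 : (0:ℝ) < r := Set.mem_Ioi.1 hr
    have hrn : r < 1 / (n + 1) := by
      rw [Real.dist_eq, sub_zero, abs_of_pos hr0] at hrd; exact hrd
    -- choose rational approximations from below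
    have hq : ∀ j : ℕ, ∃ q : ℚ, max (r - 1 / (j + 1)) (r / 2) < q ∧ (q : ℝ) < r := by
      intro j
      exact exists_rat_btwn (max_lt (by
        have : (0:ℝ) < 1 / (j + 1) := by positivity
        linarith) (by linarith))
    choose q hq1 hq2 using hq
    have hqpos : ∀ j, 0 < (q j : ℝ) := fun j =>
      lt_of_le_of_lt (by linarith) (lt_of_le_of_lt (le_max_right _ _) (hq1 j))
    have hqlt : ∀ j, (q j : ℝ) < 1 / (n + 1) := fun j => (hq2 j).trans hrn
    have hqtend : Tendsto (fun j : ℕ => (q j : ℝ)) atTop (𝓝 r) := by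
      have hlow : ∀ j : ℕ, r - 1 / (j + 1) ≤ (q j : ℝ) := fun j =>
        le_of_lt (lt_of_le_of_lt (le_max_left _ _) (hq1 j))
      have h1 : Tendsto (fun j : ℕ => r - 1 / ((j : ℝ) + 1)) atTop (𝓝 r) := by
        have := tendsto_one_div_add_atTop_nhds_zero_nat (𝕜 := ℝ)
        simpa using (tendsto_const_nhds (x := r)).sub this
      exact tendsto_of_tendsto_of_tendsto_of_le_of_le h1 tendsto_const_nhds hlow
        (fun j => (hq2 j).le)
    have hlim : Tendsto (fun j : ℕ => stmt16F E x (q j)) atTop (𝓝 (stmt16F E x r)) :=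
      (stmt16_contF E x hr0).tendsto.comp hqtend
    have habs : Tendsto (fun j : ℕ => |stmt16F E x (q j) - d|) atTop (𝓝 |stmt16F E x r - d|) :=
      (hlim.sub tendsto_const_nhds).abs
    have hle : |stmt16F E x r - d| ≤ 1 / (k + 1) :=
      le_of_tendsto habs (Eventually.of_forall fun j => hn (q j) (hqpos j) (hqlt j))
    rw [Real.dist_eq]
    exact lt_of_le_of_lt hle hk

lemma stmt16_measSet_hasDensity {E : Set (RN N)} (hE : MeasurableSet E) (d : ℝ) :
    MeasurableSet {x : RN N | hasDensity E x d} := by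
  have : {x : RN N | hasDensity E x d} = ⋂ k : ℕ, ⋃ n : ℕ, ⋂ q : ℚ,
      {x : RN N | 0 < (q : ℝ) → (q : ℝ) < 1 / (n + 1) → |stmt16F E x q - d| ≤ 1 / (k + 1)} := by
    ext x
    simp only [Set.mem_setOf_eq, Set.mem_iInter, Set.mem_iUnion, stmt16_hasDensity_char E x d]
  rw [this]
  refine MeasurableSet.iInter fun k => MeasurableSet.iUnion fun n => MeasurableSet.iInter fun q => ?_
  by_cases hq : 0 < (q : ℝ) ∧ (q : ℝ) < 1 / (n + 1)
  · have : {x : RN N | 0 < (q : ℝ) → (q : ℝ) < 1 / (n + 1) → |stmt16F E x q - d| ≤ 1 / (k + 1)}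
        = {x : RN N | |stmt16F E x q - d| ≤ 1 / (k + 1)} := by
      ext x
      exact ⟨fun h => h hq.1 hq.2, fun h _ _ => h⟩
    rw [this]
    exact measurableSet_le (((stmt16_measF hE (q:ℝ)).sub measurable_const).abs) measurable_const
  · have : {x : RN N | 0 < (q : ℝ) → (q : ℝ) < 1 / (n + 1) → |stmt16F E x q - d| ≤ 1 / (k + 1)}
        = Set.univ := by
      ext x
      simp only [Set.mem_setOf_eq, Set.mem_univ, iff_true]
      intro h1 h2; exact absurd ⟨h1, h2⟩ hq
    rw [this]; exact MeasurableSet.univ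

lemma stmt16_measSet_densOne {E : Set (RN N)} (hE : MeasurableSet E) :
    MeasurableSet (densOne E) := stmt16_measSet_hasDensity hE 1

lemma stmt16_measSet_essBdry {E : Set (RN N)} (hE : MeasurableSet E) :
    MeasurableSet (essBdry E) := by
  have : essBdry E = {x : RN N | hasDensity E x 0}ᶜ ∩ {x : RN N | hasDensity E x 1}ᶜ := by
    ext x; simp [essBdry]
  rw [this]
  exact ((stmt16_measSet_hasDensity hE 0).compl).inter ((stmt16_measSet_hasDensity hE 1).compl)

lemma stmt16_hasDensity_of_tendsto (E : Set (RN N)) (x : RN N) {c : ℝ≥0∞} (hc : c ≠ ⊤)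
    (h : Tendsto (fun r => volume (E ∩ closedBall x r) / volume (closedBall x r))
      (𝓝[>] (0:ℝ)) (𝓝 c)) : hasDensity E x c.toReal := by
  have hsphere : ∀ r : ℝ, 0 < r → volume (sphere x r) = 0 := fun r hr =>
    Measure.addHaar_sphere_of_ne_zero volume x hr.ne'
  have hball : ∀ r : ℝ, 0 < r → volume (closedBall x r) = volume (ball x r) := by
    intro r hr
    refine le_antisymm ?_ (measure_mono ball_subset_closedBall)
    calc volume (closedBall x r) = volume (ball x r ∪ sphere x r) := by rw [ball_union_sphere]
      _ ≤ volume (ball x r) + volume (sphere x r) := measure_union_le _ _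
      _ = volume (ball x r) := by rw [hsphere r hr, add_zero]
  have hballE : ∀ r : ℝ, 0 < r → volume (E ∩ closedBall x r) = volume (E ∩ ball x r) := by
    intro r hr
    refine le_antisymm ?_ (measure_mono (Set.inter_subset_inter_right E ball_subset_closedBall))
    calc volume (E ∩ closedBall x r) ≤ volume ((E ∩ ball x r) ∪ sphere x r) := by
          refine measure_mono fun y hy => ?_
          by_cases hyb : y ∈ ball x r
          · exact Or.inl ⟨hy.1, hyb⟩
          · have hy2 : y ∈ ball x r ∪ sphere x r := by rw [ball_union_sphere]; exact hy.2
            rcases hy2 with h' | h'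
            · exact absurd h' hyb
            · exact Or.inr h'
      _ ≤ volume (E ∩ ball x r) + volume (sphere x r) := measure_union_le _ _
      _ = volume (E ∩ ball x r) := by rw [hsphere r hr, add_zero]
  have htr : Tendsto (fun r => (volume (E ∩ closedBall x r) / volume (closedBall x r)).toReal)
      (𝓝[>] (0:ℝ)) (𝓝 c.toReal) := (ENNReal.tendsto_toReal hc).comp h
  have heq : (fun r => (volume (E ∩ closedBall x r) / volume (closedBall x r)).toReal)
      =ᶠ[𝓝[>] (0:ℝ)] fun r => stmt16F E x r := by
    filter_upwards [self_mem_nhdsWithin] with r hr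
    have hr0 : (0:ℝ) < r := Set.mem_Ioi.1 hr
    rw [hballE r hr0, hball r hr0, ENNReal.toReal_div]
    rfl
  exact htr.congr' heq

lemma stmt16_volume_essBdry {E : Set (RN N)} (hE : MeasurableSet E) :
    volume (essBdry E) = 0 := by
  have h := Besicovitch.ae_tendsto_measure_inter_div_of_measurableSet
    (volume : Measure (RN N)) hE
  have h2 : ∀ᵐ x ∂(volume : Measure (RN N)), x ∉ essBdry E := by
    filter_upwards [h] with x hx
    intro hmem
    by_cases hxE : x ∈ E
    · have : Set.indicator E (1 : RN N → ℝ≥0∞) x = 1 := by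
        rw [Set.indicator_of_mem hxE]; rfl
      rw [this] at hx
      have hd := stmt16_hasDensity_of_tendsto E x one_ne_top hx
      rw [ENNReal.toReal_one] at hd
      exact hmem.2 hd
    · have : Set.indicator E (1 : RN N → ℝ≥0∞) x = 0 := Set.indicator_of_notMem hxE _
      rw [this] at hx
      have hd := stmt16_hasDensity_of_tendsto E x (by simp) hx
      rw [ENNReal.toReal_zero] at hd
      exact hmem.1 hd
  have := ae_iff.1 h2
  simpa [not_not] using this

lemma stmt16_sigmaFinite {Ω : Set (RN N)} (p : Measure (RN N)) (hnull : p Ωᶜ = 0)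
    (hloc : ∀ x ∈ Ω, ∃ s ∈ 𝓝 x, p s < ⊤) : SigmaFinite p := by
  classical
  set 𝒰 : Set (Set (RN N)) := {U | IsOpen U ∧ p U < ⊤} with h𝒰
  obtain ⟨T, hTc, hT𝒰, hTU⟩ := TopologicalSpace.isOpen_sUnion_countable 𝒰 (fun U hU => hU.1)
  refine Measure.sigmaFinite_of_countable (S := insert Ωᶜ T) (hTc.insert _) ?_ ?_
  · rintro s (rfl | hs)
    · rw [hnull]; exact ENNReal.zero_lt_top
    · exact (hT𝒰 hs).2
  · rw [Set.sUnion_insert]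
    refine Set.eq_univ_of_forall fun x => ?_
    by_cases hx : x ∈ Ω
    · obtain ⟨s, hs, hps⟩ := hloc x hx
      have hxint : x ∈ interior s := mem_interior_iff_mem_nhds.2 hs
      have hmem : interior s ∈ 𝒰 := ⟨isOpen_interior, lt_of_le_of_lt
        (measure_mono interior_subset) hps⟩
      have : x ∈ ⋃₀ 𝒰 := ⟨interior s, hmem, hxint⟩
      rw [← hTU] at this
      exact Or.inr this
    · exact Or.inl hx

lemma stmt16_integrable {Ω : Set (RN N)} (p : Measure (RN N)) (hnull : p Ωᶜ = 0)
    (hloc : ∀ x ∈ Ω, ∃ s ∈ 𝓝 x, p s < ⊤) {g : RN N → ℝ}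
    (hg : AEStronglyMeasurable g p) {C : ℝ} (hC : ∀ x, |g x| ≤ C)
    {K : Set (RN N)} (hK : IsCompact K) (hKΩ : K ⊆ Ω) (hsupp : ∀ x ∉ K, g x = 0) :
    Integrable g p := by
  classical
  -- find an open set U ⊇ K with p U < ⊤
  have hUx : ∀ x ∈ K, ∃ U : Set (RN N), IsOpen U ∧ x ∈ U ∧ p U < ⊤ := by
    intro x hx
    obtain ⟨s, hs, hps⟩ := hloc x (hKΩ hx)
    exact ⟨interior s, isOpen_interior, mem_interior_iff_mem_nhds.2 hs,
      lt_of_le_of_lt (measure_mono interior_subset) hps⟩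
  choose! U hUopen hUmem hUfin using hUx
  obtain ⟨t, htK, htcov⟩ := hK.elim_nhds_subcover U (fun x hx => (hUopen x hx).mem_nhds
    (hUmem x hx))
  set V : Set (RN N) := ⋃ x ∈ t, U x with hV
  have hVK : K ⊆ V := htcov
  have hVfin : p V < ⊤ := by
    refine lt_of_le_of_lt (measure_biUnion_finset_le t U) ?_
    exact ENNReal.sum_lt_top.2 fun x hx => hUfin x (htK x hx)
  have hVmeas : MeasurableSet V := by
    refine MeasurableSet.biUnion t.countable_toSet fun x hx => ?_
    exact (hUopen x (htK x hx)).measurableSet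
  refine ⟨hg, ?_⟩
  rw [hasFiniteIntegral_iff_norm]
  have hnorm : ∀ x, ENNReal.ofReal ‖g x‖ = (‖g x‖₊ : ℝ≥0∞) := fun x => by rw [ofReal_norm, enorm_eq_nnnorm]
  simp only [hnorm]
  have hbound : ∀ x, (‖g x‖₊ : ℝ≥0∞) ≤ V.indicator (fun _ => ENNReal.ofReal C) x := by
    intro x
    by_cases hx : x ∈ V
    · rw [Set.indicator_of_mem hx]
      have : (‖g x‖₊ : ℝ≥0∞) = ENNReal.ofReal |g x| := by
        rw [← Real.nnnorm_abs]
        rw [← enorm_eq_nnnorm, ← ofReal_norm]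
        simp
      rw [this]
      exact ENNReal.ofReal_le_ofReal (hC x)
    · have : g x = 0 := hsupp x fun hxK => hx (hVK hxK)
      simp [this]
  calc ∫⁻ x, (‖g x‖₊ : ℝ≥0∞) ∂p ≤ ∫⁻ x, V.indicator (fun _ => ENNReal.ofReal C) x ∂p :=
        lintegral_mono hbound
    _ = ENNReal.ofReal C * p V := by rw [lintegral_indicator hVmeas]; simp [mul_comm]
    _ < ⊤ := ENNReal.mul_lt_top ENNReal.ofReal_lt_top hVfin

lemma stmt16_jordan (p q : Measure (RN N)) [SigmaFinite p] [SigmaFinite q] :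
    ∃ P Q : Measure (RN N), P ≤ p ∧ Q ≤ q ∧ P ⟂ₘ Q ∧
      ∀ f : RN N → ℝ, Integrable f p → Integrable f q →
        ∫ x, f x ∂P - ∫ x, f x ∂Q = ∫ x, f x ∂p - ∫ x, f x ∂q := by
  classical
  set ρ : Measure (RN N) := p + q with hρ
  have hpρ : p ≪ ρ := Measure.absolutelyContinuous_of_le (Measure.le_add_right le_rfl)
  have hqρ : q ≪ ρ := Measure.absolutelyContinuous_of_le (Measure.le_add_left le_rfl)
  set F : RN N → ℝ≥0∞ := p.rnDeriv ρ with hF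
  set G : RN N → ℝ≥0∞ := q.rnDeriv ρ with hG
  have hFm : Measurable F := Measure.measurable_rnDeriv p ρ
  have hGm : Measurable G := Measure.measurable_rnDeriv q ρ
  set S : Set (RN N) := {x | G x ≤ F x} with hS
  have hSm : MeasurableSet S := measurableSet_le hGm hFm
  set dP : RN N → ℝ≥0∞ := S.indicator (fun x => F x - G x) with hdP
  set dQ : RN N → ℝ≥0∞ := Sᶜ.indicator (fun x => G x - F x) with hdQ
  set m : RN N → ℝ≥0∞ := fun x => min (F x) (G x) with hm
  have hdPm : Measurable dP := (hFm.sub hGm).indicator hSm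
  have hdQm : Measurable dQ := (hGm.sub hFm).indicator hSm.compl
  have hmm : Measurable m := hFm.min hGm
  set P : Measure (RN N) := ρ.withDensity dP with hP
  set Q : Measure (RN N) := ρ.withDensity dQ with hQ
  set W : Measure (RN N) := ρ.withDensity m with hW
  have keyP : dP + m = F := by
    funext x
    by_cases hx : x ∈ S
    · have hgf : G x ≤ F x := hx
      simp only [Pi.add_apply, hdP, Set.indicator_of_mem hx, hm, min_eq_right hgf]
      exact tsub_add_cancel_of_le hgf
    · have hfg : F x ≤ G x := le_of_lt (lt_of_not_ge hx)
      simp only [Pi.add_apply, hdP, Set.indicator_of_notMem hx, hm, min_eq_left hfg, zero_add]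
  have keyQ : dQ + m = G := by
    funext x
    by_cases hx : x ∈ S
    · have hgf : G x ≤ F x := hx
      simp only [Pi.add_apply, hdQ, Set.indicator_of_notMem (by simpa using hx : x ∉ Sᶜ), hm,
        min_eq_right hgf, zero_add]
    · have hfg : F x ≤ G x := le_of_lt (lt_of_not_ge hx)
      simp only [Pi.add_apply, hdQ, Set.indicator_of_mem (by simpa using hx : x ∈ Sᶜ), hm,
        min_eq_left hfg]
      exact tsub_add_cancel_of_le hfg
  have hPW : P + W = p := by
    rw [hP, hW, ← withDensity_add_left hdPm m, keyP]
    exact Measure.withDensity_rnDeriv_eq p ρ hpρ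
  have hQW : Q + W = q := by
    rw [hQ, hW, ← withDensity_add_left hdQm m, keyQ]
    exact Measure.withDensity_rnDeriv_eq q ρ hqρ
  have hPle : P ≤ p := hPW ▸ Measure.le_add_right le_rfl
  have hQle : Q ≤ q := hQW ▸ Measure.le_add_right le_rfl
  have hsing : P ⟂ₘ Q := by
    refine ⟨Sᶜ, hSm.compl, ?_, ?_⟩
    · rw [hP, withDensity_apply _ hSm.compl]
      rw [setLIntegral_congr_fun hSm.compl (fun x hx =>
        Set.indicator_of_notMem (by simpa using hx) _)]
      exact lintegral_zero
    · rw [compl_compl, hQ, withDensity_apply _ hSm]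
      rw [setLIntegral_congr_fun hSm (fun x hx =>
        Set.indicator_of_notMem (by simpa using hx) _)]
      exact lintegral_zero
  refine ⟨P, Q, hPle, hQle, hsing, fun f hfp hfq => ?_⟩
  have hfPW : Integrable f (P + W) := hPW.symm ▸ hfp
  have hfQW : Integrable f (Q + W) := hQW.symm ▸ hfq
  rw [integrable_add_measure] at hfPW hfQW
  rw [← hPW, ← hQW, integral_add_measure hfPW.1 hfPW.2, integral_add_measure hfQW.1 hfQW.2]
  ring

lemma stmt16_locM {Ω : Set (RN N)} (p q : Measure (RN N))
    (hnp : p Ωᶜ = 0) (hnq : q Ωᶜ = 0)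
    (hlp : ∀ x ∈ Ω, ∃ s ∈ 𝓝 x, p s < ⊤) (hlq : ∀ x ∈ Ω, ∃ s ∈ 𝓝 x, q s < ⊤) :
    ∃ μ : LocM N Ω, ∀ f : RN N → ℝ, Integrable f p → Integrable f q →
      μ.intg f = ∫ x, f x ∂p - ∫ x, f x ∂q := by
  haveI := stmt16_sigmaFinite p hnp hlp
  haveI := stmt16_sigmaFinite q hnq hlq
  obtain ⟨P, Q, hPle, hQle, hsing, hint⟩ := stmt16_jordan p q
  refine ⟨⟨P, Q, hsing, le_antisymm ((Measure.le_iff'.1 hPle Ωᶜ).trans hnp.le) zero_le,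
    le_antisymm ((Measure.le_iff'.1 hQle Ωᶜ).trans hnq.le) zero_le,
    fun x hx => ?_, fun x hx => ?_⟩, fun f hfp hfq => hint f hfp hfq⟩
  · obtain ⟨s, hs, hps⟩ := hlp x hx
    exact ⟨s, hs, lt_of_le_of_lt (Measure.le_iff'.1 hPle s) hps⟩
  · obtain ⟨s, hs, hqs⟩ := hlq x hx
    exact ⟨s, hs, lt_of_le_of_lt (Measure.le_iff'.1 hQle s) hqs⟩

lemma stmt16_intg_sub {Ω : Set (RN N)} (σ : LocM N Ω) (f g : RN N → ℝ)
    (h1 : Integrable f σ.pos) (h2 : Integrable f σ.neg)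
    (h3 : Integrable g σ.pos) (h4 : Integrable g σ.neg) :
    σ.intg (fun x => f x - g x) = σ.intg f - σ.intg g := by
  unfold LocM.intg
  rw [integral_sub h1 h3, integral_sub h2 h4]; ring

lemma stmt16_intg_add {Ω : Set (RN N)} (σ : LocM N Ω) (f g : RN N → ℝ)
    (h1 : Integrable f σ.pos) (h2 : Integrable f σ.neg)
    (h3 : Integrable g σ.pos) (h4 : Integrable g σ.neg) :
    σ.intg (fun x => f x + g x) = σ.intg f + σ.intg g := by
  unfold LocM.intg
  rw [integral_add h1 h3, integral_add h2 h4]; ring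

lemma stmt16_withDensity_le (ν : Measure (RN N)) (w : RN N → ℝ≥0)
    (hw : ∀ x, ((w x : ℝ≥0∞)) ≤ 1) : ν.withDensity (fun x => (w x : ℝ≥0∞)) ≤ ν := by
  rw [Measure.le_iff]
  intro s hs
  rw [withDensity_apply _ hs]
  calc ∫⁻ x in s, (w x : ℝ≥0∞) ∂ν ≤ ∫⁻ _ in s, 1 ∂ν := lintegral_mono fun x => hw x
    _ = ν s := setLIntegral_one s

lemma stmt16_withDensity_integral (ν : Measure (RN N)) (w : RN N → ℝ≥0) (hw : Measurable w)
    (c : RN N → ℝ) (hwc : ∀ x, (w x : ℝ) = c x) (g : RN N → ℝ) :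
    ∫ x, g x ∂(ν.withDensity (fun x => (w x : ℝ≥0∞))) = ∫ x, c x * g x ∂ν := by
  rw [integral_withDensity_eq_integral_smul hw g]
  congr 1
  funext x
  rw [NNReal.smul_def, ← hwc x]
  rfl

end Stmt16Aux

/-- for `A ∈ DM_loc^1(Ω)` and `χ_E ∈ BV_loc^{A,λ}(Ω)` for some Borel `λ`,
`div A ⌊ ∂*E = (A, Dχ_E)_0 - (A, Dχ_E)_1` as measures on `Ω`. -/
theorem stmt16 {N : ℕ} (Ω : Set (RN N)) (hΩ : IsOpen Ω)
    (a : RN N → RN N) (ha : LocallyIntegrableOn a Ω volume)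
    (σ : LocM N Ω) (hdiv : IsDivergenceD Ω a σ)
    (E : Set (RN N)) (hE : MeasurableSet E) (hEΩ : E ⊆ Ω)
    (lam : RN N → ℝ) (hlam : IsLam lam) (hmem : SetBVlocD Ω a σ E lam) :
    ∃ μ0 μ1 : LocM N Ω,
      (∀ φ, IsTest Ω φ → pairingSetD Ω a σ E (fun _ => 0) φ = μ0.intg φ) ∧
      (∀ φ, IsTest Ω φ → pairingSetD Ω a σ E (fun _ => 1) φ = μ1.intg φ) ∧
      (∀ φ, IsTest Ω φ →
        σ.intg ((essBdry E).indicator φ) = μ0.intg φ - μ1.intg φ) := by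
  classical
  obtain ⟨hmem1, μL, hμL⟩ := hmem
  set ib : RN N → ℝ := (essBdry E).indicator (fun _ => (1:ℝ)) with hib
  set i1 : RN N → ℝ := (densOne E).indicator (fun _ => (1:ℝ)) with hi1
  have hibm : Measurable ib := measurable_const.indicator (stmt16_measSet_essBdry hE)
  have hi1m : Measurable i1 := measurable_const.indicator (stmt16_measSet_densOne hE)
  have hib01 : ∀ x, 0 ≤ ib x ∧ ib x ≤ 1 := by
    intro x; by_cases h : x ∈ essBdry E <;> simp [hib, h]
  have hi101 : ∀ x, 0 ≤ i1 x ∧ i1 x ≤ 1 := by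
    intro x; by_cases h : x ∈ densOne E <;> simp [hi1, h]
  have hl0 : ∀ x, 0 ≤ lam x := fun x => (hlam.2 x).1
  have hl1 : ∀ x, lam x ≤ 1 := fun x => (hlam.2 x).2
  set c0 : RN N → ℝ := fun x => lam x * ib x with hc0
  set c1 : RN N → ℝ := fun x => (1 - lam x) * ib x with hc1
  have hc0m : Measurable c0 := hlam.1.mul hibm
  have hc1m : Measurable c1 := (measurable_const.sub hlam.1).mul hibm
  have hc0_01 : ∀ x, 0 ≤ c0 x ∧ c0 x ≤ 1 := by
    intro x
    simp only [hc0]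
    constructor
    · exact mul_nonneg (hl0 x) (hib01 x).1
    · nlinarith [hl0 x, hl1 x, (hib01 x).1, (hib01 x).2]
  have hc1_01 : ∀ x, 0 ≤ c1 x ∧ c1 x ≤ 1 := by
    intro x
    simp only [hc1]
    constructor
    · exact mul_nonneg (by linarith [hl1 x]) (hib01 x).1
    · nlinarith [hl0 x, hl1 x, (hib01 x).1, (hib01 x).2]
  set w0 : RN N → ℝ≥0 := fun x => Real.toNNReal (c0 x) with hw0
  set w1 : RN N → ℝ≥0 := fun x => Real.toNNReal (c1 x) with hw1
  have hw0m : Measurable w0 := hc0m.real_toNNReal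
  have hw1m : Measurable w1 := hc1m.real_toNNReal
  have hw0le : ∀ x, ((w0 x : ℝ≥0∞)) ≤ 1 := by
    intro x
    rw [hw0]
    exact ENNReal.ofReal_le_one.2 (hc0_01 x).2
  have hw1le : ∀ x, ((w1 x : ℝ≥0∞)) ≤ 1 := by
    intro x
    rw [hw1]
    exact ENNReal.ofReal_le_one.2 (hc1_01 x).2
  have hw0c : ∀ x, (w0 x : ℝ) = c0 x := fun x => Real.coe_toNNReal _ (hc0_01 x).1
  have hw1c : ∀ x, (w1 x : ℝ) = c1 x := fun x => Real.coe_toNNReal _ (hc1_01 x).1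
  set τ0p : Measure (RN N) := σ.pos.withDensity (fun x => (w0 x : ℝ≥0∞)) with hτ0p
  set τ0n : Measure (RN N) := σ.neg.withDensity (fun x => (w0 x : ℝ≥0∞)) with hτ0n
  set τ1p : Measure (RN N) := σ.pos.withDensity (fun x => (w1 x : ℝ≥0∞)) with hτ1p
  set τ1n : Measure (RN N) := σ.neg.withDensity (fun x => (w1 x : ℝ≥0∞)) with hτ1n
  have hτ0ple : τ0p ≤ σ.pos := stmt16_withDensity_le _ _ hw0le
  have hτ0nle : τ0n ≤ σ.neg := stmt16_withDensity_le _ _ hw0le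
  have hτ1ple : τ1p ≤ σ.pos := stmt16_withDensity_le _ _ hw1le
  have hτ1nle : τ1n ≤ σ.neg := stmt16_withDensity_le _ _ hw1le
  -- null and local finiteness transfer
  have hnull_le : ∀ (m1 m2 : Measure (RN N)), m1 ≤ m2 → m2 Ωᶜ = 0 → m1 Ωᶜ = 0 :=
    fun m1 m2 h h2 => le_antisymm ((Measure.le_iff'.1 h Ωᶜ).trans h2.le) zero_le
  have hloc_le : ∀ (m1 m2 : Measure (RN N)), m1 ≤ m2 →
      (∀ x ∈ Ω, ∃ s ∈ 𝓝 x, m2 s < ⊤) → (∀ x ∈ Ω, ∃ s ∈ 𝓝 x, m1 s < ⊤) := by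
    intro m1 m2 h h2 x hx
    obtain ⟨s, hs, h3⟩ := h2 x hx
    exact ⟨s, hs, lt_of_le_of_lt (Measure.le_iff'.1 h s) h3⟩
  have hnull_add : ∀ (m1 m2 : Measure (RN N)), m1 Ωᶜ = 0 → m2 Ωᶜ = 0 → (m1 + m2) Ωᶜ = 0 := by
    intro m1 m2 h1 h2
    rw [Measure.add_apply, h1, h2, add_zero]
  have hloc_add : ∀ (m1 m2 : Measure (RN N)), (∀ x ∈ Ω, ∃ s ∈ 𝓝 x, m1 s < ⊤) →
      (∀ x ∈ Ω, ∃ s ∈ 𝓝 x, m2 s < ⊤) → (∀ x ∈ Ω, ∃ s ∈ 𝓝 x, (m1 + m2) s < ⊤) := by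
    intro m1 m2 h1 h2 x hx
    obtain ⟨s, hs, hs1⟩ := h1 x hx
    obtain ⟨t, ht, ht2⟩ := h2 x hx
    refine ⟨s ∩ t, Filter.inter_mem hs ht, ?_⟩
    rw [Measure.add_apply]
    exact ENNReal.add_lt_top.2 ⟨lt_of_le_of_lt (measure_mono Set.inter_subset_left) hs1,
      lt_of_le_of_lt (measure_mono Set.inter_subset_right) ht2⟩
  -- the two measures
  set p0 : Measure (RN N) := μL.pos + τ0p with hp0
  set q0 : Measure (RN N) := μL.neg + τ0n with hq0
  set p1 : Measure (RN N) := μL.pos + τ1n with hp1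
  set q1 : Measure (RN N) := μL.neg + τ1p with hq1
  obtain ⟨μ0, hμ0⟩ := stmt16_locM p0 q0
    (hnull_add _ _ μL.posNull (hnull_le _ _ hτ0ple σ.posNull))
    (hnull_add _ _ μL.negNull (hnull_le _ _ hτ0nle σ.negNull))
    (hloc_add _ _ μL.posLoc (hloc_le _ _ hτ0ple σ.posLoc))
    (hloc_add _ _ μL.negLoc (hloc_le _ _ hτ0nle σ.negLoc))
  obtain ⟨μ1, hμ1⟩ := stmt16_locM p1 q1
    (hnull_add _ _ μL.posNull (hnull_le _ _ hτ1nle σ.negNull))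
    (hnull_add _ _ μL.negNull (hnull_le _ _ hτ1ple σ.posNull))
    (hloc_add _ _ μL.posLoc (hloc_le _ _ hτ1nle σ.negLoc))
    (hloc_add _ _ μL.negLoc (hloc_le _ _ hτ1ple σ.posLoc))
  -- null boundary (w.r.t. volume)
  have hbd0 : ∀ᵐ x ∂(volume : Measure (RN N)), x ∉ essBdry E := by
    rw [ae_iff]
    simpa [not_not] using stmt16_volume_essBdry hE
  -- main per-test-function computation
  have main : ∀ φ : RN N → ℝ, IsTest Ω φ →
      pairingSetD Ω a σ E (fun _ => 0) φ = μ0.intg φ ∧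
      pairingSetD Ω a σ E (fun _ => 1) φ = μ1.intg φ ∧
      σ.intg ((essBdry E).indicator φ) = μ0.intg φ - μ1.intg φ := by
    intro φ hφ
    have hφc : Continuous φ := hφ.1.continuous
    have hφs : HasCompactSupport φ := hφ.2.1
    have hφΩ : tsupport φ ⊆ Ω := hφ.2.2
    obtain ⟨Cφ, hCφ⟩ := hφs.exists_bound_of_continuous hφc
    have hCφ' : ∀ x, |φ x| ≤ Cφ := by
      intro x; rw [← Real.norm_eq_abs]; exact hCφ x
    -- integrability machinery
    have hInt : ∀ (ν : Measure (RN N)), ν Ωᶜ = 0 → (∀ x ∈ Ω, ∃ s ∈ 𝓝 x, ν s < ⊤) →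
        ∀ (g : RN N → ℝ), Measurable g → ∀ B : ℝ, (∀ x, |g x| ≤ B) →
        Integrable (fun x => g x * φ x) ν := by
      intro ν h1 h2 g hg B hB
      refine stmt16_integrable ν h1 h2 ((hg.mul hφc.measurable).aestronglyMeasurable)
        (C := B * Cφ) ?_ hφs hφΩ ?_
      · intro x
        rw [abs_mul]
        exact mul_le_mul (hB x) (hCφ' x) (abs_nonneg _) (le_trans (abs_nonneg _) (hB x))
      · intro x hx
        rw [image_eq_zero_of_notMem_tsupport hx, mul_zero]
    have hIntφ : ∀ (ν : Measure (RN N)), ν Ωᶜ = 0 → (∀ x ∈ Ω, ∃ s ∈ 𝓝 x, ν s < ⊤) →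
        Integrable φ ν := by
      intro ν h1 h2
      refine stmt16_integrable ν h1 h2 hφc.measurable.aestronglyMeasurable
        (C := Cφ) hCφ' hφs hφΩ (fun x hx => image_eq_zero_of_notMem_tsupport hx)
    -- measurable chiLam
    have hchiLm : Measurable (chiLam E lam) := by
      have : chiLam E lam = fun x => i1 x + c0 x := rfl
      rw [this]
      exact hi1m.add hc0m
    have hchiLbd : ∀ x, |chiLam E lam x| ≤ 2 := by
      intro x
      have h1 := hi101 x
      have h2 := hc0_01 x
      have : chiLam E lam x = i1 x + c0 x := rfl
      rw [this, abs_le]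
      constructor <;> linarith
    -- integrabilities
    have IXLp : Integrable (fun x => chiLam E lam x * φ x) σ.pos :=
      hInt σ.pos σ.posNull σ.posLoc _ hchiLm 2 hchiLbd
    have IXLn : Integrable (fun x => chiLam E lam x * φ x) σ.neg :=
      hInt σ.neg σ.negNull σ.negLoc _ hchiLm 2 hchiLbd
    have hc0bd : ∀ x, |c0 x| ≤ 1 := by
      intro x; rw [abs_le]; have := hc0_01 x; constructor <;> linarith
    have hc1bd : ∀ x, |c1 x| ≤ 1 := by
      intro x; rw [abs_le]; have := hc1_01 x; constructor <;> linarith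
    have Ic0p : Integrable (fun x => c0 x * φ x) σ.pos :=
      hInt σ.pos σ.posNull σ.posLoc _ hc0m 1 hc0bd
    have Ic0n : Integrable (fun x => c0 x * φ x) σ.neg :=
      hInt σ.neg σ.negNull σ.negLoc _ hc0m 1 hc0bd
    have Ic1p : Integrable (fun x => c1 x * φ x) σ.pos :=
      hInt σ.pos σ.posNull σ.posLoc _ hc1m 1 hc1bd
    have Ic1n : Integrable (fun x => c1 x * φ x) σ.neg :=
      hInt σ.neg σ.negNull σ.negLoc _ hc1m 1 hc1bd
    -- φ integrable w.r.t. all building blocks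
    have hφμLp : Integrable φ μL.pos := hIntφ _ μL.posNull μL.posLoc
    have hφμLn : Integrable φ μL.neg := hIntφ _ μL.negNull μL.negLoc
    have hφσp : Integrable φ σ.pos := hIntφ _ σ.posNull σ.posLoc
    have hφσn : Integrable φ σ.neg := hIntφ _ σ.negNull σ.negLoc
    have hφτ0p : Integrable φ τ0p := hφσp.mono_measure hτ0ple
    have hφτ0n : Integrable φ τ0n := hφσn.mono_measure hτ0nle
    have hφτ1p : Integrable φ τ1p := hφσp.mono_measure hτ1ple
    have hφτ1n : Integrable φ τ1n := hφσn.mono_measure hτ1nle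
    -- values of μ0 and μ1 on φ
    have h0 := hμ0 φ (hφμLp.add_measure hφτ0p) (hφμLn.add_measure hφτ0n)
    have h1 := hμ1 φ (hφμLp.add_measure hφτ1n) (hφμLn.add_measure hφτ1p)
    rw [hp0, hq0, integral_add_measure hφμLp hφτ0p, integral_add_measure hφμLn hφτ0n,
      hτ0p, hτ0n, stmt16_withDensity_integral _ _ hw0m c0 hw0c,
      stmt16_withDensity_integral _ _ hw0m c0 hw0c] at h0
    rw [hp1, hq1, integral_add_measure hφμLp hφτ1n, integral_add_measure hφμLn hφτ1p,
      hτ1p, hτ1n, stmt16_withDensity_integral _ _ hw1m c1 hw1c,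
      stmt16_withDensity_integral _ _ hw1m c1 hw1c] at h1
    have h0' : μ0.intg φ = μL.intg φ + σ.intg (fun x => c0 x * φ x) := by
      rw [h0]; unfold LocM.intg; ring
    have h1' : μ1.intg φ = μL.intg φ - σ.intg (fun x => c1 x * φ x) := by
      rw [h1]; unfold LocM.intg; ring
    -- the pairing identity for lam
    have hpair := hμL φ hφ
    unfold pairingSetD at hpair
    -- volume integrals agree
    have hvol_eq : ∀ lam' : RN N → ℝ, (∫ x in Ω, chiLam E lam' x * fderiv ℝ φ x (a x))
        = ∫ x in Ω, chiLam E lam x * fderiv ℝ φ x (a x) := by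
      intro lam'
      refine integral_congr_ae ?_
      filter_upwards [ae_restrict_of_ae hbd0] with x hx
      simp [chiLam, Set.indicator_of_notMem hx]
    -- σ.intg identities
    have hσ0 : σ.intg (fun x => chiLam E (fun _ => (0:ℝ)) x * φ x)
        = σ.intg (fun x => chiLam E lam x * φ x) - σ.intg (fun x => c0 x * φ x) := by
      have hfun : (fun x => chiLam E (fun _ => (0:ℝ)) x * φ x)
          = fun x => chiLam E lam x * φ x - c0 x * φ x := by
        funext x
        simp only [chiLam, hc0, hib]
        ring
      rw [hfun]
      exact stmt16_intg_sub σ _ _ IXLp IXLn Ic0p Ic0n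
    have hσ1 : σ.intg (fun x => chiLam E (fun _ => (1:ℝ)) x * φ x)
        = σ.intg (fun x => chiLam E lam x * φ x) + σ.intg (fun x => c1 x * φ x) := by
      have hfun : (fun x => chiLam E (fun _ => (1:ℝ)) x * φ x)
          = fun x => chiLam E lam x * φ x + c1 x * φ x := by
        funext x
        simp only [chiLam, hc0, hc1, hib]
        ring
      rw [hfun]
      exact stmt16_intg_add σ _ _ IXLp IXLn Ic1p Ic1n
    have hbdind : σ.intg ((essBdry E).indicator φ)
        = σ.intg (fun x => c0 x * φ x) + σ.intg (fun x => c1 x * φ x) := by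
      have hfun : (essBdry E).indicator φ = fun x => c0 x * φ x + c1 x * φ x := by
        funext x
        by_cases hx : x ∈ essBdry E
        · rw [Set.indicator_of_mem hx]
          simp only [hc0, hc1, hib, Set.indicator_of_mem hx]
          ring
        · rw [Set.indicator_of_notMem hx]
          simp only [hc0, hc1, hib, Set.indicator_of_notMem hx]
          ring
      rw [hfun]
      exact stmt16_intg_add σ _ _ Ic0p Ic0n Ic1p Ic1n
    refine ⟨?_, ?_, ?_⟩
    · unfold pairingSetD
      rw [hσ0, hvol_eq (fun _ => (0:ℝ)), h0']
      linarith
    · unfold pairingSetD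
      rw [hσ1, hvol_eq (fun _ => (1:ℝ)), h1']
      linarith
    · rw [hbdind, h0', h1']
      ring
  exact ⟨μ0, μ1, fun φ hφ => (main φ hφ).1, fun φ hφ => (main φ hφ).2.1,
    fun φ hφ => (main φ hφ).2.2⟩
end
end

section
/- For every integer n ≥ 1, ∫_{(0,1)^n} (1 + |y|²)^{-(n+1)/2} dy = ω_{n+1}/2^{n+1}, where ω_{n+1} is the Lebesgue measure of the unit ball in ℝ^{n+1}. -/
open MeasureTheory Filter Topology Metric Set ENNReal NNReal

noncomputable section

namespace Stmt17Aux

def cubeP (n : ℕ) : Set (Fin n → ℝ) := {y | ∀ i, y i ∈ Set.Ioo (0:ℝ) 1}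

def Ffun (n : ℕ) (y : Fin n → ℝ) : ℝ := (1 + ∑ i, y i ^ 2) ^ (-(((n : ℝ) + 1) / 2))

def setB (n : ℕ) : Set (Fin (n+1) → ℝ) := {x | ∑ i, x i ^ 2 < 1}
def setQ (n : ℕ) : Set (Fin (n+1) → ℝ) := {x | ∀ i, 0 < x i}
def setGj (n : ℕ) (j : Fin (n+1)) : Set (Fin (n+1) → ℝ) := {x | ∀ i, i ≠ j → x i < x j}
def setR (n : ℕ) : Set (Fin (n+1) → ℝ) := setB n ∩ setQ n ∩ setGj n (Fin.last n)
def setS (n : ℕ) : Set (Fin (n+1) → ℝ) :=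
  {x | (∀ i : Fin n, x i.castSucc ∈ Set.Ioo (0:ℝ) 1) ∧ 0 < x (Fin.last n) ∧
    (x (Fin.last n))^2 * (1 + ∑ i : Fin n, x i.castSucc ^ 2) < 1}

lemma continuous_sq_sum (n : ℕ) : Continuous (fun x : Fin n → ℝ => ∑ i, x i ^ 2) := by
  fun_prop

lemma isOpen_setB (n : ℕ) : IsOpen (setB n) :=
  isOpen_lt (continuous_sq_sum _) continuous_const

lemma isOpen_setQ (n : ℕ) : IsOpen (setQ n) := by
  have : setQ n = ⋂ i, {x : Fin (n+1) → ℝ | 0 < x i} := by ext x; simp [setQ]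
  rw [this]
  exact isOpen_iInter_of_finite fun i => isOpen_lt continuous_const (continuous_apply i)

lemma isOpen_setGj (n : ℕ) (j : Fin (n+1)) : IsOpen (setGj n j) := by
  have : setGj n j = ⋂ i, {x : Fin (n+1) → ℝ | i ≠ j → x i < x j} := by ext x; simp [setGj]
  rw [this]
  refine isOpen_iInter_of_finite fun i => ?_
  by_cases h : i = j
  · simp [h]
  · have : {x : Fin (n+1) → ℝ | i ≠ j → x i < x j} = {x | x i < x j} := by
      ext x; simp [h]
    rw [this]
    exact isOpen_lt (continuous_apply i) (continuous_apply j)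

lemma isOpen_cubeP (n : ℕ) : IsOpen (cubeP n) := by
  have : cubeP n = ⋂ i, ((fun y : Fin n → ℝ => y i) ⁻¹' Set.Ioo 0 1) := by ext y; simp [cubeP]
  rw [this]
  exact isOpen_iInter_of_finite fun i => isOpen_Ioo.preimage (continuous_apply i)

lemma isOpen_setS (n : ℕ) : IsOpen (setS n) := by
  have h1 : IsOpen {x : Fin (n+1) → ℝ | ∀ i : Fin n, x i.castSucc ∈ Set.Ioo (0:ℝ) 1} := by
    have : {x : Fin (n+1) → ℝ | ∀ i : Fin n, x i.castSucc ∈ Set.Ioo (0:ℝ) 1}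
        = ⋂ i : Fin n, ((fun x : Fin (n+1) → ℝ => x i.castSucc) ⁻¹' Set.Ioo 0 1) := by
      ext x; simp
    rw [this]
    exact isOpen_iInter_of_finite fun i => isOpen_Ioo.preimage (continuous_apply _)
  have h2 : IsOpen {x : Fin (n+1) → ℝ | 0 < x (Fin.last n)} :=
    isOpen_lt continuous_const (continuous_apply _)
  have h3 : IsOpen {x : Fin (n+1) → ℝ |
      (x (Fin.last n))^2 * (1 + ∑ i : Fin n, x i.castSucc ^ 2) < 1} :=
    isOpen_lt (by fun_prop) continuous_const
  have : setS n = _ ∩ (_ ∩ _) := Set.setOf_and.trans (by rw [Set.setOf_and])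
  exact this ▸ h1.inter (h2.inter h3)

lemma null_hyperplane (n : ℕ) (i : Fin (n+1)) :
    volume {x : Fin (n+1) → ℝ | x i = 0} = 0 := by
  have : {x : Fin (n+1) → ℝ | x i = 0}
      = (LinearMap.ker (LinearMap.proj i : (Fin (n+1) → ℝ) →ₗ[ℝ] ℝ) : Set (Fin (n+1) → ℝ)) := by
    ext x; simp [LinearMap.mem_ker]
  rw [this]
  apply Measure.addHaar_submodule
  intro h
  have : (fun _ => (1:ℝ)) ∈ LinearMap.ker (LinearMap.proj i : (Fin (n+1) → ℝ) →ₗ[ℝ] ℝ) := by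
    rw [h]; trivial
  simp [LinearMap.mem_ker] at this

lemma volB_eq (n : ℕ) : volume (setB n) = 2^(n+1) * volume (setB n ∩ setQ n) := by
  classical
  set A := setB n ∩ setQ n with hA
  have hAm : MeasurableSet A := ((isOpen_setB n).inter (isOpen_setQ n)).measurableSet
  set Φ : (Fin (n+1) → Bool) → (Fin (n+1) → ℝ) → (Fin (n+1) → ℝ) :=
    fun ε x i => if ε i then -x i else x i with hΦ
  have hmp : ∀ ε, MeasurePreserving (Φ ε) volume volume := by
    intro ε
    have heq : Φ ε = fun (x : Fin (n+1) → ℝ) i =>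
        (fun i => if ε i then (Neg.neg : ℝ → ℝ) else id) i (x i) := by
      funext x i; by_cases h : ε i <;> simp [hΦ, h]
    rw [heq, volume_pi]
    exact measurePreserving_pi _ _ (fun i => by
      by_cases h : ε i
      · simpa [h] using Measure.measurePreserving_neg (volume : Measure ℝ)
      · simpa [h] using MeasurePreserving.id (volume : Measure ℝ))
  have hsq : ∀ ε (x : Fin (n+1) → ℝ), ∑ i, (Φ ε x i) ^ 2 = ∑ i, x i ^ 2 := by
    intro ε x
    refine Finset.sum_congr rfl fun i _ => ?_
    by_cases h : ε i <;> simp [hΦ, h]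
  have hpred : ∀ ε x, x ∈ Φ ε ⁻¹' A ↔
      (∑ i, x i ^ 2 < 1 ∧ ∀ i, 0 < (if ε i then -x i else x i)) := by
    intro ε x
    simp only [mem_preimage, hA, setB, setQ, Set.mem_inter_iff, mem_setOf_eq]
    rw [hsq]
  -- disjoint
  have hdisj : Pairwise (Function.onFun Disjoint (fun ε => Φ ε ⁻¹' A)) := by
    intro ε ε' hne
    obtain ⟨i, hi⟩ := Function.ne_iff.mp hne
    refine Set.disjoint_left.mpr fun x hx hx' => ?_
    have h1 := ((hpred ε x).mp hx).2 i
    have h2 := ((hpred ε' x).mp hx').2 i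
    cases hε : ε i <;> cases hε' : ε' i <;> rw [hε] at h1 <;> rw [hε'] at h2 <;>
      simp_all <;> linarith
  have hsub : ∀ ε, Φ ε ⁻¹' A ⊆ setB n := fun ε x hx => ((hpred ε x).mp hx).1
  have hcover : setB n ⊆ (⋃ ε, Φ ε ⁻¹' A) ∪ (⋃ i, {x : Fin (n+1) → ℝ | x i = 0}) := by
    intro x hx
    by_cases hz : ∃ i, x i = 0
    · right; obtain ⟨i, hi⟩ := hz; exact Set.mem_iUnion.mpr ⟨i, hi⟩
    · left
      push_neg at hz
      refine Set.mem_iUnion.mpr ⟨fun i => decide (x i < 0), (hpred _ x).mpr ⟨hx, fun i => ?_⟩⟩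
      by_cases h : x i < 0
      · simp [h]
      · simp [h]; exact lt_of_le_of_ne (not_lt.mp h) (Ne.symm (hz i))
  have hnull : volume (⋃ i, {x : Fin (n+1) → ℝ | x i = 0}) = 0 :=
    measure_iUnion_null fun i => null_hyperplane n i
  have hUm : ∀ ε, MeasurableSet (Φ ε ⁻¹' A) := fun ε => hAm.preimage (hmp ε).measurable
  have hvolU : volume (⋃ ε, Φ ε ⁻¹' A) = volume (setB n) := by
    apply le_antisymm
    · exact measure_mono (Set.iUnion_subset hsub)
    · calc volume (setB n)
          ≤ volume ((⋃ ε, Φ ε ⁻¹' A) ∪ (⋃ i, {x : Fin (n+1) → ℝ | x i = 0})) :=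
            measure_mono hcover
        _ ≤ volume (⋃ ε, Φ ε ⁻¹' A) + volume (⋃ i, {x : Fin (n+1) → ℝ | x i = 0}) :=
            measure_union_le _ _
        _ = volume (⋃ ε, Φ ε ⁻¹' A) := by rw [hnull, add_zero]
  have hsum : volume (⋃ ε, Φ ε ⁻¹' A) = ∑ ε : Fin (n+1) → Bool, volume (Φ ε ⁻¹' A) := by
    rw [← measure_biUnion_finset (by
        intro a _ b _ hab
        exact hdisj hab) (fun ε _ => hUm ε)]
    simp
  have hcard : (Finset.univ : Finset (Fin (n+1) → Bool)).card = 2^(n+1) := by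
    simp [Finset.card_univ]
  rw [← hvolU, hsum]
  have : ∀ ε, volume (Φ ε ⁻¹' A) = volume A := fun ε =>
    (hmp ε).measure_preimage hAm.nullMeasurableSet
  simp only [this, Finset.sum_const, hcard, nsmul_eq_mul]
  push_cast
  ring

lemma null_pairplane (n : ℕ) (i j : Fin (n+1)) (hij : i ≠ j) :
    volume {x : Fin (n+1) → ℝ | x i = x j} = 0 := by
  have : {x : Fin (n+1) → ℝ | x i = x j}
      = (LinearMap.ker ((LinearMap.proj (R := ℝ) (φ := fun _ : Fin (n+1) => ℝ) i
          - LinearMap.proj j)) : Set (Fin (n+1) → ℝ)) := by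
    ext x
    simp [LinearMap.mem_ker, sub_eq_zero]
  rw [this]
  apply Measure.addHaar_submodule
  intro h
  have : (Pi.single i 1 : Fin (n+1) → ℝ) ∈ LinearMap.ker
      ((LinearMap.proj (R := ℝ) (φ := fun _ : Fin (n+1) => ℝ) i - LinearMap.proj j)) := by
    rw [h]; trivial
  simp [LinearMap.mem_ker, Pi.single_apply, hij.symm] at this

lemma volBQ_eq (n : ℕ) :
    volume (setB n ∩ setQ n) = ((n : ℝ≥0∞) + 1) * volume (setR n) := by
  classical
  set A := setB n ∩ setQ n with hA
  have hGm : ∀ j, MeasurableSet (A ∩ setGj n j) := fun j =>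
    (((isOpen_setB n).inter (isOpen_setQ n)).inter (isOpen_setGj n j)).measurableSet
  -- swap symmetry
  have key : ∀ j, volume (A ∩ setGj n j) = volume (A ∩ setGj n (Fin.last n)) := by
    intro j
    set sw := Equiv.swap j (Fin.last n) with hsw
    set Ψ : (Fin (n+1) → ℝ) → (Fin (n+1) → ℝ) := fun x i => x (sw i) with hΨ
    have hmp : MeasurePreserving Ψ volume volume := by
      have h1 := volume_measurePreserving_piCongrLeft (fun _ : Fin (n+1) => ℝ) sw
      have h2 : ⇑(MeasurableEquiv.piCongrLeft (fun _ : Fin (n+1) => ℝ) sw) = Ψ := by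
        funext x j'
        rw [MeasurableEquiv.coe_piCongrLeft]
        have : j' = sw (sw.symm j') := by simp
        rw [this, Equiv.piCongrLeft_apply_apply]
        simp [hΨ, hsw, Equiv.symm_swap, Equiv.swap_apply_self]
      rwa [h2] at h1
    have hpre : Ψ ⁻¹' (A ∩ setGj n (Fin.last n)) = A ∩ setGj n j := by
      ext x
      simp only [mem_preimage, hA, Set.mem_inter_iff, setB, setQ, setGj, mem_setOf_eq, hΨ]
      have hs : ∑ i, x (sw i) ^ 2 = ∑ i, x i ^ 2 := Equiv.sum_comp sw (fun i => x i ^ 2)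
      have hq : (∀ i, 0 < x (sw i)) ↔ ∀ i, 0 < x i := by
        constructor
        · intro h i
          have := h (sw.symm i); simpa using this
        · intro h i; exact h _
      have hswlast : sw (Fin.last n) = j := Equiv.swap_apply_right _ _
      have hG : (∀ i, i ≠ Fin.last n → x (sw i) < x (sw (Fin.last n))) ↔
          ∀ k, k ≠ j → x k < x j := by
        rw [hswlast]
        constructor
        · intro h k hk
          have hne : sw.symm k ≠ Fin.last n := by
            intro he
            apply hk
            rw [← hswlast, ← he]; simp
          have := h (sw.symm k) hne
          simpa using this
        · intro h i hi
          refine h (sw i) fun he => hi ?_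
          rw [← hswlast] at he
          exact sw.injective he
      rw [hs, hq, hG]
    rw [← hpre]
    exact hmp.measure_preimage (hGm (Fin.last n)).nullMeasurableSet
  -- almost disjoint cover
  set N : Set (Fin (n+1) → ℝ) :=
    ⋃ (p : Fin (n+1) × Fin (n+1)) (_ : p.1 ≠ p.2), {x | x p.1 = x p.2} with hN
  have hNnull : volume N = 0 := by
    refine measure_iUnion_null fun p => measure_iUnion_null fun hp => null_pairplane n _ _ hp
  have hdisj : Pairwise (Function.onFun Disjoint (fun j => A ∩ setGj n j)) := by
    intro j k hjk
    refine Set.disjoint_left.mpr fun x hx hx' => ?_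
    have h1 := hx.2 k hjk.symm
    have h2 := hx'.2 j hjk
    exact absurd (h1.trans h2) (lt_irrefl _)
  have hcover : A ⊆ (⋃ j, A ∩ setGj n j) ∪ N := by
    intro x hx
    by_cases hxN : x ∈ N
    · right; exact hxN
    · left
      obtain ⟨j, hj⟩ := Finite.exists_max x
      refine Set.mem_iUnion.mpr ⟨j, hx, fun i hi => ?_⟩
      rcases lt_or_eq_of_le (hj i) with h | h
      · exact h
      · exfalso
        exact hxN (Set.mem_iUnion.mpr ⟨(i, j), Set.mem_iUnion.mpr ⟨hi, h⟩⟩)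
  have hvolU : volume (⋃ j, A ∩ setGj n j) = volume A := by
    apply le_antisymm
    · exact measure_mono (Set.iUnion_subset fun j => Set.inter_subset_left)
    · calc volume A ≤ volume ((⋃ j, A ∩ setGj n j) ∪ N) := measure_mono hcover
        _ ≤ volume (⋃ j, A ∩ setGj n j) + volume N := measure_union_le _ _
        _ = _ := by rw [hNnull, add_zero]
  have hsum : volume (⋃ j, A ∩ setGj n j) = ∑ j : Fin (n+1), volume (A ∩ setGj n j) := by
    rw [← measure_biUnion_finset (fun a _ b _ hab => hdisj hab) (fun j _ => hGm j)]
    simp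
  rw [← hvolU, hsum]
  simp only [key, Finset.sum_const, Finset.card_univ, Fintype.card_fin, nsmul_eq_mul]
  have : setR n = A ∩ setGj n (Fin.last n) := rfl
  rw [this]
  push_cast
  ring

def Tmap (n : ℕ) (x : Fin (n+1) → ℝ) : Fin (n+1) → ℝ :=
  fun i => if i = Fin.last n then x (Fin.last n) else x i * x (Fin.last n)

def Tder (n : ℕ) (x : Fin (n+1) → ℝ) : (Fin (n+1) → ℝ) →L[ℝ] (Fin (n+1) → ℝ) :=
  ContinuousLinearMap.pi (fun i => if i = Fin.last n then
      ContinuousLinearMap.proj (Fin.last n)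
    else x i • ContinuousLinearMap.proj (Fin.last n)
      + x (Fin.last n) • ContinuousLinearMap.proj i)

lemma hasFDerivAt_Tmap (n : ℕ) (x : Fin (n+1) → ℝ) :
    HasFDerivAt (Tmap n) (Tder n x) x := by
  apply hasFDerivAt_pi''
  intro i
  have hproj : (ContinuousLinearMap.proj i).comp (Tder n x)
      = (if i = Fin.last n then ContinuousLinearMap.proj (Fin.last n)
        else x i • ContinuousLinearMap.proj (Fin.last n)
          + x (Fin.last n) • ContinuousLinearMap.proj i) := by
    apply ContinuousLinearMap.ext
    intro v
    simp [Tder]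
  rw [hproj]
  by_cases h : i = Fin.last n
  · subst h
    simp only [Tmap, if_pos rfl]
    exact hasFDerivAt_apply _ x
  · rw [if_neg h]
    have : (fun y : Fin (n+1) → ℝ => Tmap n y i) = fun y => y i * y (Fin.last n) := by
      funext y; simp [Tmap, h]
    rw [this]
    exact (hasFDerivAt_apply i x).mul (hasFDerivAt_apply (Fin.last n) x)

lemma det_Tder (n : ℕ) (x : Fin (n+1) → ℝ) :
    (Tder n x).det = x (Fin.last n) ^ n := by
  classical
  set b := Pi.basisFun ℝ (Fin (n+1))
  have hdet : (Tder n x).det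
      = (LinearMap.toMatrix b b ((Tder n x) : (Fin (n+1) → ℝ) →ₗ[ℝ] (Fin (n+1) → ℝ))).det := by
    rw [LinearMap.det_toMatrix]
  set M := LinearMap.toMatrix b b ((Tder n x) : (Fin (n+1) → ℝ) →ₗ[ℝ] (Fin (n+1) → ℝ)) with hM
  have hMij : ∀ i j, M i j = (Tder n x) (Pi.single j 1) i := by
    intro i j
    rw [hM, LinearMap.toMatrix_apply]
    simp [b]
  have happ : ∀ (j i : Fin (n+1)), (Tder n x) (Pi.single j 1) i
      = if i = Fin.last n then (if Fin.last n = j then (1:ℝ) else 0)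
        else x i * (if Fin.last n = j then 1 else 0) + x (Fin.last n) * (if i = j then 1 else 0) := by
    intro j i
    by_cases h : i = Fin.last n <;>
      simp [Tder, ContinuousLinearMap.pi_apply, h, Pi.single_apply]
  have htri : M.BlockTriangular id := by
    intro i j hij
    have hij' : j < i := hij
    have hji : j ≠ Fin.last n := by
      intro he
      exact absurd (he ▸ hij' : Fin.last n < i) (not_lt.mpr (Fin.le_last i))
    rw [hMij, happ]
    by_cases h : i = Fin.last n
    · rw [if_pos h, if_neg (fun he => hji he.symm)]
    · rw [if_neg h, if_neg (fun he => hji he.symm), if_neg (fun he => absurd he (ne_of_gt hij'))]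
      ring
  have hdiag : ∀ i, M i i = if i = Fin.last n then 1 else x (Fin.last n) := by
    intro i
    rw [hMij, happ]
    by_cases h : i = Fin.last n
    · simp [h]
    · simp [h, Ne.symm h]
  rw [hdet, Matrix.det_of_upperTriangular htri]
  calc ∏ i, M i i = ∏ i : Fin (n+1), (if i = Fin.last n then (1:ℝ) else x (Fin.last n)) :=
        Finset.prod_congr rfl fun i _ => hdiag i
    _ = (∏ i : Fin n, (if (i.castSucc : Fin (n+1)) = Fin.last n then (1:ℝ) else x (Fin.last n)))
        * (if (Fin.last n : Fin (n+1)) = Fin.last n then (1:ℝ) else x (Fin.last n)) :=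
        Fin.prod_univ_castSucc _
    _ = x (Fin.last n) ^ n := by
        rw [if_pos rfl, mul_one]
        rw [Finset.prod_congr rfl fun i _ => if_neg (Fin.castSucc_lt_last i).ne]
        simp

lemma injOn_Tmap (n : ℕ) : Set.InjOn (Tmap n) (setS n) := by
  intro x hx x' hx' h
  have hlast : x (Fin.last n) = x' (Fin.last n) := by
    have := congrFun h (Fin.last n)
    simpa [Tmap] using this
  funext i
  by_cases hi : i = Fin.last n
  · rw [hi]; exact hlast
  · have := congrFun h i
    simp only [Tmap, if_neg hi] at this
    rw [hlast] at this
    exact mul_right_cancel₀ (ne_of_gt hx'.2.1) this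

lemma image_Tmap (n : ℕ) : Tmap n '' setS n = setR n := by
  ext z
  constructor
  · rintro ⟨x, hx, rfl⟩
    obtain ⟨hIoo, hpos, hlt⟩ := hx
    have hTlast : Tmap n x (Fin.last n) = x (Fin.last n) := by simp [Tmap]
    have hTcs : ∀ i : Fin n, Tmap n x i.castSucc = x i.castSucc * x (Fin.last n) := by
      intro i; simp [Tmap, (Fin.castSucc_lt_last i).ne]
    refine ⟨⟨?_, ?_⟩, ?_⟩
    · -- setB
      show ∑ i, Tmap n x i ^ 2 < 1
      rw [Fin.sum_univ_castSucc]
      have : ∑ i : Fin n, Tmap n x i.castSucc ^ 2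
          = (∑ i : Fin n, x i.castSucc ^ 2) * x (Fin.last n) ^ 2 := by
        rw [Finset.sum_mul]
        exact Finset.sum_congr rfl fun i _ => by rw [hTcs i]; ring
      rw [this, hTlast]
      nlinarith [hlt]
    · -- setQ
      intro i
      induction i using Fin.lastCases with
      | last => rw [hTlast]; exact hpos
      | cast i => rw [hTcs i]; exact mul_pos (hIoo i).1 hpos
    · -- setGj last
      intro i hi
      obtain ⟨i₀, rfl⟩ : ∃ i₀ : Fin n, i = i₀.castSucc := by
        rcases Fin.eq_castSucc_or_eq_last i with h | h
        · exact h
        · exact absurd h hi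
      rw [hTcs i₀, hTlast]
      exact mul_lt_of_lt_one_left hpos (hIoo i₀).2
  · intro hz
    obtain ⟨⟨hB, hQ⟩, hG⟩ := hz
    have hzl : 0 < z (Fin.last n) := hQ (Fin.last n)
    set x : Fin (n+1) → ℝ :=
      fun i => if i = Fin.last n then z (Fin.last n) else z i / z (Fin.last n) with hxdef
    have hxl : x (Fin.last n) = z (Fin.last n) := by simp [hxdef]
    have hxi : ∀ i, i ≠ Fin.last n → x i = z i / z (Fin.last n) := by
      intro i hi; simp [hxdef, hi]
    refine ⟨x, ⟨fun i => ?_, ?_, ?_⟩, ?_⟩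
    · rw [hxi i.castSucc (Fin.castSucc_lt_last i).ne]
      exact ⟨div_pos (hQ i.castSucc) hzl, by
        rw [div_lt_one hzl]; exact hG i.castSucc (Fin.castSucc_lt_last i).ne⟩
    · rw [hxl]; exact hzl
    · rw [hxl]
      have hsum : ∑ i : Fin n, x i.castSucc ^ 2
          = (∑ i : Fin n, z i.castSucc ^ 2) / z (Fin.last n) ^ 2 := by
        rw [Finset.sum_div]
        refine Finset.sum_congr rfl fun i _ => ?_
        rw [hxi i.castSucc (Fin.castSucc_lt_last i).ne, div_pow]
      rw [hsum]
      have h2 : z (Fin.last n) ^ 2 * (1 + (∑ i : Fin n, z i.castSucc ^ 2) / z (Fin.last n) ^ 2)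
          = ∑ i, z i ^ 2 := by
        rw [Fin.sum_univ_castSucc]
        field_simp
        ring
      rw [h2]; exact hB
    · funext i
      by_cases hi : i = Fin.last n
      · subst hi; simp [Tmap, hxl]
      · simp only [Tmap, if_neg hi]
        rw [hxi i hi, hxl, div_mul_cancel₀ _ (ne_of_gt hzl)]

def prodS (n : ℕ) : Set (ℝ × (Fin n → ℝ)) :=
  {p | (∀ i, p.2 i ∈ Set.Ioo (0:ℝ) 1) ∧ 0 < p.1 ∧ p.1^2 * (1 + ∑ i, p.2 i ^ 2) < 1}

lemma isOpen_prodS (n : ℕ) : IsOpen (prodS n) := by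
  have h1 : IsOpen {p : ℝ × (Fin n → ℝ) | ∀ i, p.2 i ∈ Set.Ioo (0:ℝ) 1} := by
    have : {p : ℝ × (Fin n → ℝ) | ∀ i, p.2 i ∈ Set.Ioo (0:ℝ) 1}
        = ⋂ i, ((fun p : ℝ × (Fin n → ℝ) => p.2 i) ⁻¹' Set.Ioo 0 1) := by ext p; simp
    rw [this]
    exact isOpen_iInter_of_finite fun i =>
      isOpen_Ioo.preimage ((continuous_apply i).comp continuous_snd)
  have h2 : IsOpen {p : ℝ × (Fin n → ℝ) | 0 < p.1} := isOpen_lt continuous_const continuous_fst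
  have h3 : IsOpen {p : ℝ × (Fin n → ℝ) | p.1^2 * (1 + ∑ i, p.2 i ^ 2) < 1} :=
    isOpen_lt (by fun_prop) continuous_const
  have : prodS n = _ ∩ (_ ∩ _) := Set.setOf_and.trans (by rw [Set.setOf_and])
  exact this ▸ h1.inter (h2.inter h3)

-- step 1: CoV
lemma volR_cov (n : ℕ) :
    volume (setR n) = ∫⁻ x in setS n, ENNReal.ofReal |x (Fin.last n) ^ n| := by
  have hSm : MeasurableSet (setS n) := (isOpen_setS n).measurableSet
  have h := lintegral_image_eq_lintegral_abs_det_fderiv_mul volume hSm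
    (fun x _ => (hasFDerivAt_Tmap n x).hasFDerivWithinAt) (injOn_Tmap n) (fun _ => (1:ℝ≥0∞))
  rw [image_Tmap n] at h
  rw [setLIntegral_one] at h
  rw [h]
  refine lintegral_congr fun x => ?_
  rw [det_Tder, mul_one]

-- step 2: transfer to product
lemma volS_prod (n : ℕ) :
    ∫⁻ x in setS n, ENNReal.ofReal |x (Fin.last n) ^ n|
      = ∫⁻ p in prodS n, ENNReal.ofReal |p.1 ^ n|
          ∂((volume : Measure ℝ).prod (volume : Measure (Fin n → ℝ))) := by
  have hmp := measurePreserving_piFinSuccAbove (fun _ : Fin (n+1) => (volume : Measure ℝ))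
    (Fin.last n)
  have hemb := (MeasurableEquiv.piFinSuccAbove (fun _ : Fin (n+1) => ℝ)
    (Fin.last n)).measurableEmbedding
  have hpre : (MeasurableEquiv.piFinSuccAbove (fun _ : Fin (n+1) => ℝ) (Fin.last n)) ⁻¹' prodS n
      = setS n := by
    ext x
    simp only [mem_preimage, prodS, setS, mem_setOf_eq, MeasurableEquiv.piFinSuccAbove_apply,
      Fin.insertNthEquiv, Equiv.coe_fn_symm_mk]
    simp [Fin.removeNth, Fin.succAbove_last]
  have h := hmp.setLIntegral_comp_preimage_emb hemb
    (fun p => ENNReal.ofReal |p.1 ^ n|) (prodS n)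
  rw [hpre] at h
  simp only [← volume_pi] at h
  rw [← h]
  refine setLIntegral_congr_fun (isOpen_setS n).measurableSet (fun x _ => ?_)
  congr 1

-- inner integral
lemma inner_int (n : ℕ) (y : Fin n → ℝ) :
    (∫⁻ t, (prodS n).indicator (fun p => ENNReal.ofReal |p.1 ^ n|) (t, y))
      = (cubeP n).indicator (fun y => ENNReal.ofReal (Ffun n y / ((n:ℝ)+1))) y := by
  by_cases hy : y ∈ cubeP n
  · set q := ∑ i, y i ^ 2 with hq
    have hq0 : 0 ≤ q := Finset.sum_nonneg fun i _ => sq_nonneg _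
    have h1q : (0:ℝ) < 1 + q := by linarith
    set a : ℝ := (1 + q) ^ (-(1/2) : ℝ) with ha
    have ha0 : 0 < a := Real.rpow_pos_of_pos h1q _
    have ha2 : a ^ 2 = (1 + q)⁻¹ := by
      rw [ha, ← Real.rpow_natCast ((1+q) ^ (-(1/2):ℝ)) 2, ← Real.rpow_mul h1q.le]
      norm_num
      exact Real.rpow_neg_one _
    have key : ∀ t : ℝ, 0 < t → (t ^ 2 * (1 + q) < 1 ↔ t < a) := by
      intro t ht
      rw [← lt_div_iff₀ h1q, one_div, ← ha2]
      constructor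
      · intro h
        by_contra hle
        push_neg at hle
        exact absurd (pow_le_pow_left₀ ha0.le hle 2) (not_le.mpr h)
      · intro h
        exact pow_lt_pow_left₀ h ht.le two_ne_zero
    have hset : ∀ t : ℝ, (t, y) ∈ prodS n ↔ t ∈ Set.Ioo 0 a := by
      intro t
      simp only [prodS, mem_setOf_eq, Set.mem_Ioo, ← hq]
      constructor
      · rintro ⟨-, ht, hlt⟩
        exact ⟨ht, (key t ht).mp hlt⟩
      · rintro ⟨ht, hlt⟩
        exact ⟨hy, ht, (key t ht).mpr hlt⟩
    have hind : (fun t => (prodS n).indicator (fun p => ENNReal.ofReal |p.1 ^ n|) (t, y))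
        = (Set.Ioo 0 a).indicator (fun t => ENNReal.ofReal |t ^ n|) := by
      funext t
      by_cases h : t ∈ Set.Ioo 0 a
      · rw [Set.indicator_of_mem ((hset t).mpr h), Set.indicator_of_mem h]
      · rw [Set.indicator_of_notMem (fun hc => h ((hset t).mp hc)),
          Set.indicator_of_notMem h]
    rw [hind, lintegral_indicator measurableSet_Ioo _]
    have habs : ∫⁻ t in Set.Ioo (0:ℝ) a, ENNReal.ofReal |t ^ n|
        = ∫⁻ t in Set.Ioo (0:ℝ) a, ENNReal.ofReal (t ^ n) := by
      refine setLIntegral_congr_fun measurableSet_Ioo (fun t ht => ?_)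
      rw [abs_of_nonneg (pow_nonneg ht.1.le n)]
    rw [habs]
    have hInt : IntegrableOn (fun t => t ^ n) (Set.Ioo 0 a) := by
      exact (intervalIntegral.intervalIntegrable_pow n (a := 0) (b := a)).1.mono_set
        Set.Ioo_subset_Ioc_self
    have hnn : 0 ≤ᵐ[volume.restrict (Set.Ioo (0:ℝ) a)] fun t => t ^ n := by
      refine (ae_restrict_iff' measurableSet_Ioo).mpr (ae_of_all _ fun t ht => ?_)
      exact pow_nonneg ht.1.le n
    rw [← ofReal_integral_eq_lintegral_ofReal hInt hnn]
    have hval : ∫ t in Set.Ioo (0:ℝ) a, t ^ n = a ^ (n+1) / ((n:ℝ)+1) := by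
      rw [← integral_Ioc_eq_integral_Ioo, ← intervalIntegral.integral_of_le ha0.le,
        integral_pow]
      simp
    have hpow : a ^ (n+1) = Ffun n y := by
      rw [ha, ← Real.rpow_natCast ((1+q) ^ (-(1/2):ℝ)) (n+1), ← Real.rpow_mul h1q.le]
      rw [Ffun, ← hq]
      congr 1
      push_cast
      ring
    rw [hval, hpow, Set.indicator_of_mem hy]
  · rw [Set.indicator_of_notMem hy]
    have hz : (fun t => (prodS n).indicator (fun p => ENNReal.ofReal |p.1 ^ n|) (t, y))
        = fun _ => 0 :=
      funext fun t => Set.indicator_of_notMem (fun hc => hy fun i => hc.1 i) _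
    rw [hz, lintegral_zero]

lemma volR_eq (n : ℕ) :
    volume (setR n) = ∫⁻ y in cubeP n, ENNReal.ofReal (Ffun n y / ((n:ℝ)+1)) := by
  rw [volR_cov, volS_prod]
  have hfm : Measurable fun p : ℝ × (Fin n → ℝ) =>
      (prodS n).indicator (fun p => ENNReal.ofReal |p.1 ^ n|) p := by
    refine Measurable.indicator ?_ (isOpen_prodS n).measurableSet
    exact ((measurable_fst.pow_const n).abs).ennreal_ofReal
  rw [← lintegral_indicator (isOpen_prodS n).measurableSet _]
  rw [lintegral_prod_symm _ hfm.aemeasurable]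
  simp_rw [inner_int]
  rw [lintegral_indicator (isOpen_cubeP n).measurableSet _]

lemma continuous_Ffun (n : ℕ) : Continuous (Ffun n) := by
  apply Continuous.rpow_const
  · fun_prop
  · intro y
    left
    have : (0:ℝ) < 1 + ∑ i, y i ^ 2 := by positivity
    exact ne_of_gt this

theorem stmt17' (n : ℕ) (hn : 1 ≤ n) :
    ∫ y in {y : EuclideanSpace ℝ (Fin n) | ∀ i, y i ∈ Set.Ioo (0:ℝ) 1},
        (1 + ‖y‖ ^ 2) ^ (-(((n : ℝ) + 1) / 2))
      = (volume (Metric.ball (0 : EuclideanSpace ℝ (Fin (n + 1))) 1)).toReal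
          / 2 ^ (n + 1) := by
  classical
  -- transfer the integral to the pi space
  have hvoln := EuclideanSpace.volume_preserving_symm_measurableEquiv_toLp (Fin n)
  set e := (MeasurableEquiv.toLp 2 (Fin n → ℝ)).symm with he
  have happ : ∀ (y : EuclideanSpace ℝ (Fin n)) (i : Fin n), e y i = y i := fun y i => rfl
  have hcube : {y : EuclideanSpace ℝ (Fin n) | ∀ i, y i ∈ Set.Ioo (0:ℝ) 1}
      = e ⁻¹' (cubeP n) := by
    ext y
    simp only [mem_setOf_eq, mem_preimage, cubeP, happ]
  have hnormsq : ∀ y : EuclideanSpace ℝ (Fin n), ‖y‖ ^ 2 = ∑ i, y i ^ 2 := by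
    intro y
    rw [EuclideanSpace.norm_eq, Real.sq_sqrt (by positivity)]
    refine Finset.sum_congr rfl fun i _ => ?_
    rw [Real.norm_eq_abs, sq_abs]
  have step1 : ∫ y in {y : EuclideanSpace ℝ (Fin n) | ∀ i, y i ∈ Set.Ioo (0:ℝ) 1},
      (1 + ‖y‖ ^ 2) ^ (-(((n : ℝ) + 1) / 2)) = ∫ y in cubeP n, Ffun n y := by
    rw [hcube]
    rw [← hvoln.setIntegral_preimage_emb e.measurableEmbedding (fun y => Ffun n y) (cubeP n)]
    refine setIntegral_congr_ae (hcube ▸ ?_) (ae_of_all _ fun y _ => ?_)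
    · exact (hcube ▸ ((isOpen_cubeP n).measurableSet.preimage e.measurable))
    · simp only [Ffun, happ]
      rw [← hnormsq y]
  -- to lintegral
  set I := ∫⁻ y in cubeP n, ENNReal.ofReal (Ffun n y) with hI
  have step2 : ∫ y in cubeP n, Ffun n y = I.toReal := by
    rw [hI, integral_eq_lintegral_of_nonneg_ae
      (ae_of_all _ fun y => show (0:ℝ) ≤ Ffun n y from
        Real.rpow_nonneg (by positivity) _)
      ((continuous_Ffun n).aestronglyMeasurable.restrict)]
  -- ball volume = volume of setB
  have hvolm := EuclideanSpace.volume_preserving_symm_measurableEquiv_toLp (Fin (n+1))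
  set e' := (MeasurableEquiv.toLp 2 (Fin (n+1) → ℝ)).symm with he'
  have hball : volume (Metric.ball (0 : EuclideanSpace ℝ (Fin (n + 1))) 1)
      = volume (setB n) := by
    have hpre : e' ⁻¹' (setB n) = Metric.ball (0 : EuclideanSpace ℝ (Fin (n + 1))) 1 := by
      ext x
      simp only [mem_preimage, setB, mem_setOf_eq, mem_ball_zero_iff]
      have hxe : ∀ i, e' x i = x i := fun i => rfl
      have hns : ‖x‖ ^ 2 = ∑ i, e' x i ^ 2 := by
        rw [EuclideanSpace.norm_eq, Real.sq_sqrt (by positivity)]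
        exact Finset.sum_congr rfl fun i _ => by rw [Real.norm_eq_abs, sq_abs]; rfl
      constructor
      · intro h
        nlinarith [norm_nonneg x, hns]
      · intro h
        nlinarith [norm_nonneg x, hns]
    rw [← hpre]
    exact hvolm.measure_preimage (isOpen_setB n).measurableSet.nullMeasurableSet
  -- main volume identity
  have hmain : volume (setB n) = 2^(n+1) * I := by
    rw [volB_eq, volBQ_eq, volR_eq]
    congr 1
    have hc : ((n : ℝ≥0∞) + 1) = ENNReal.ofReal ((n:ℝ)+1) := by
      rw [ENNReal.ofReal_add (Nat.cast_nonneg n) zero_le_one, ENNReal.ofReal_natCast,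
        ENNReal.ofReal_one]
    have hdiv : ∀ y : Fin n → ℝ, ENNReal.ofReal (Ffun n y / ((n:ℝ)+1))
        = ENNReal.ofReal (Ffun n y) * (ENNReal.ofReal ((n:ℝ)+1))⁻¹ := by
      intro y
      rw [ENNReal.ofReal_div_of_pos (by positivity), div_eq_mul_inv]
    simp_rw [hdiv]
    rw [lintegral_mul_const' _ _ (by simp; positivity)]
    rw [hc, hI]
    rw [mul_comm, mul_assoc, ENNReal.inv_mul_cancel ?h1 ?h2, mul_one]
    case h1 =>
      rw [hc] at *
      simp [ENNReal.ofReal_eq_zero]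
      positivity
    case h2 => simp
  -- finish
  have hfin : volume (setB n) ≠ ⊤ := by
    rw [← hball]
    exact measure_ball_lt_top.ne
  have hIfin : I ≠ ⊤ := by
    intro h
    rw [hmain, h, ENNReal.mul_top (by simp)] at hfin
    exact hfin rfl
  rw [step1, step2, hball, hmain]
  rw [ENNReal.toReal_mul, ENNReal.toReal_pow]
  simp only [ENNReal.toReal_ofNat]
  field_simp

end Stmt17Aux

/-- `∫_{(0,1)^n} (1+|y|²)^{-(n+1)/2} dy = ω_{n+1}/2^{n+1}`. -/
theorem stmt17 (n : ℕ) (hn : 1 ≤ n) :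
    ∫ y in {y : EuclideanSpace ℝ (Fin n) | ∀ i, y i ∈ Set.Ioo (0:ℝ) 1},
        (1 + ‖y‖ ^ 2) ^ (-(((n : ℝ) + 1) / 2))
      = (volume (Metric.ball (0 : EuclideanSpace ℝ (Fin (n + 1))) 1)).toReal
          / 2 ^ (n + 1) :=
  Stmt17Aux.stmt17' n hn
end
end
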